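/- arXiv:1712.03843 — 8 statements merged into one kernel-verified Lean document; each statement's English description precedes it below -/
import Mathlib

section
/- Let (D, ρ) be a probability space and H a separable real Hilbert space with a continuous linear embedding J : H → L_∞(ρ). Let (ψ_k)_{k∈ℕ} be an orthonormal basis of H whose images J(ψ_k) are pairwise orthogonal in L₂(ρ), and suppose the singular values σ_k := ‖J ψ_k‖_{L₂(ρ)} are nonincreasing in k. Then for every n ∈ ℕ, every family of continuous linear functionals L₁, …, L_n on H, and every map φ : ℝⁿ → L_∞(ρ) (not necessarily linear or continuous), one has sup_{f ∈ H, ‖f‖_H ≤ 1} ‖ J f − φ(L₁(f), …, L_n(f)) ‖_{L_∞(ρ)} ≥ √( Σ_{k>n} σ_k² ). -/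
/-!
If `‖f‖ ≤ 1` and every `L i f` vanishes, then `f` and `-f` carry the same information, so the
worst-case error is at least `‖J f‖_∞`. It therefore suffices to find, for every `m`, a subspace
`N` of `span {ψ k | k < n + m} ∩ ⋂ ker (L i)` of dimension at least `m` on whose unit ball `J`
has sup-norm at least `(∑_{n ≤ k < n + m} σ_k²)^{1/2}`.

For an orthonormal basis `(e j)` of `N`, the vector `G x = ∑ j, (J e_j)(x) • e_j` satisfies
`⟪c, G x⟫ = (J c)(x)`, hence `‖G x‖ ≤ ‖J|_N‖` almost everywhere, and integrating `‖G x‖²` gives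
`∑ j, ‖J e_j‖²_{L₂} ≤ ‖J|_N‖²`. Expanding `e_j` in the `ψ k`, the left side equals
`∑_{k < n + m} t_k σ_k²` with weights `t_k ∈ [0, 1]` of total mass `dim N ≥ m`; since `σ` is
nonincreasing, this is at least `∑_{n ≤ k < n + m} σ_k²`.
-/

open MeasureTheory Finset Module
open scoped RealInnerProductSpace

namespace MeasureTheory.Lp

variable {D : Type*} [MeasurableSpace D] {ρ : Measure D}

theorem ae_norm_le_norm_top {E : Type*} [NormedAddCommGroup E] (h : Lp E ⊤ ρ) :
    ∀ᵐ x ∂ρ, ‖h x‖ ≤ ‖h‖ := by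
  simpa only [Lp.norm_def, toReal_eLpNorm (Lp.aestronglyMeasurable h)] using
    ae_le_lpNorm_exponent_top (Lp.memLp h)

theorem integrable_mul_top [IsFiniteMeasure ρ] (g h : Lp ℝ ⊤ ρ) :
    Integrable (fun x => g x * h x) ρ :=
  ((Lp.memLp h).integrable le_top).bdd_mul (Lp.aestronglyMeasurable g)
    (ae_norm_le_norm_top g)

theorem coeFn_sum_smul {ι : Type*} (s : Finset ι) (a : ι → ℝ) (g : ι → Lp ℝ ⊤ ρ) :
    ⇑(∑ i ∈ s, a i • g i) =ᵐ[ρ] fun x => ∑ i ∈ s, a i * g i x := by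
  filter_upwards [coeFn_fun_finsetSum s (fun i => a i • g i),
    (Filter.eventually_all_finset s).2 fun i _ => Lp.coeFn_smul (a i) (g i)] with x hsum hsmul
  rw [hsum]
  exact sum_congr rfl fun i hi => hsmul i hi

theorem integral_sq_sum_smul [IsFiniteMeasure ρ] {ι : Type*} (s : Finset ι) (a : ι → ℝ)
    (g : ι → Lp ℝ ⊤ ρ) (horth : ∀ i j, i ≠ j → ∫ x, g i x * g j x ∂ρ = 0) :
    ∫ x, ((∑ i ∈ s, a i • g i) x) ^ 2 ∂ρ = ∑ i ∈ s, a i ^ 2 * ∫ x, g i x ^ 2 ∂ρ := by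
  have hint : ∀ i j, Integrable (fun x => a i * a j * (g i x * g j x)) ρ :=
    fun i j => (integrable_mul_top (g i) (g j)).const_mul _
  calc ∫ x, ((∑ i ∈ s, a i • g i) x) ^ 2 ∂ρ
      = ∫ x, ∑ i ∈ s, ∑ j ∈ s, a i * a j * (g i x * g j x) ∂ρ := by
        refine integral_congr_ae ?_
        filter_upwards [coeFn_sum_smul s a g] with x hx
        rw [hx, sq, sum_mul_sum]
        exact sum_congr rfl fun i _ => sum_congr rfl fun j _ => by ring
    _ = ∑ i ∈ s, ∑ j ∈ s, a i * a j * ∫ x, g i x * g j x ∂ρ := by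
        rw [integral_finsetSum _ fun i _ => integrable_finsetSum _ fun j _ => hint i j]
        refine sum_congr rfl fun i _ => ?_
        rw [integral_finsetSum _ fun j _ => hint i j]
        exact sum_congr rfl fun j _ => integral_const_mul _ _
    _ = ∑ i ∈ s, a i ^ 2 * ∫ x, g i x ^ 2 ∂ρ := by
        refine sum_congr rfl fun i hi => ?_
        rw [sum_eq_single_of_mem i hi fun j _ hji => by rw [horth i j hji.symm, mul_zero]]
        simp only [sq]

end MeasureTheory.Lp

theorem norm_le_of_dense_inner_le {E : Type*} [NormedAddCommGroup E] [InnerProductSpace ℝ E]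
    {s : Set E} (hs : Dense s) {M : ℝ} (hM : 0 ≤ M) {v : E}
    (h : ∀ c ∈ s, ⟪c, v⟫ ≤ M * ‖c‖) : ‖v‖ ≤ M := by
  have hall : ∀ c, ⟪c, v⟫ ≤ M * ‖c‖ :=
    hs.induction h (isClosed_le (continuous_id.inner continuous_const)
      (continuous_const.mul continuous_norm))
  rcases (norm_nonneg v).eq_or_lt with hv | hv
  · exact hv ▸ hM
  · refine le_of_mul_le_mul_right ?_ hv
    simpa only [real_inner_self_eq_norm_mul_norm] using hall v

theorem sum_Ico_le_sum_mul_of_antitone {s t : ℕ → ℝ} (hs : Antitone s) {n m : ℕ}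
    (hsn : 0 ≤ s n) (ht0 : ∀ k, 0 ≤ t k) (ht1 : ∀ k, t k ≤ 1)
    (hsum : (m : ℝ) ≤ ∑ k ∈ range (n + m), t k) :
    ∑ k ∈ Ico n (n + m), s k ≤ ∑ k ∈ range (n + m), t k * s k := by
  have hhead : (∑ k ∈ range n, t k) * s n ≤ ∑ k ∈ range n, t k * s k := by
    rw [sum_mul]
    exact sum_le_sum fun k hk =>
      mul_le_mul_of_nonneg_left (hs (mem_range.1 hk).le) (ht0 k)
  have htail : ∑ k ∈ Ico n (n + m), (1 - t k) * s k ≤ ∑ k ∈ Ico n (n + m), (1 - t k) * s n :=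
    sum_le_sum fun k hk =>
      mul_le_mul_of_nonneg_left (hs (mem_Ico.1 hk).1) (sub_nonneg.2 (ht1 k))
  simp only [sub_mul, one_mul, sum_sub_distrib, ← sum_mul, sum_const, Nat.card_Ico,
    add_tsub_cancel_left, nsmul_eq_mul] at htail
  rw [← sum_range_add_sum_Ico _ (Nat.le_add_right n m)] at hsum ⊢
  nlinarith

theorem Submodule.finrank_le_finrank_inf_iInf_ker_add {K M : Type*} [Field K] [AddCommGroup M]
    [Module K M] (V : Submodule K M) [FiniteDimensional K V] {n : ℕ} (L : Fin n → M →ₗ[K] K) :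
    finrank K V ≤ finrank K ↥(V ⊓ ⨅ i, LinearMap.ker (L i)) + n := by
  let Φ := (LinearMap.pi L).domRestrict V
  have hker : finrank K ↥(V ⊓ ⨅ i, LinearMap.ker (L i)) = finrank K (LinearMap.ker Φ) := by
    rw [LinearMap.ker_domRestrict, LinearMap.ker_pi, ← Submodule.map_comap_subtype,
      Submodule.finrank_map_subtype_eq]
  have hrange : finrank K (LinearMap.range Φ) ≤ n := by
    simpa using Submodule.finrank_le (LinearMap.range Φ)
  have := LinearMap.finrank_range_add_finrank_ker Φ
  omega

section

variable {H : Type*} [NormedAddCommGroup H] [InnerProductSpace ℝ H]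

theorem Orthonormal.sum_inner_smul_eq_of_mem_span {ι : Type*} {v : ι → H}
    (hv : Orthonormal ℝ v) {s : Finset ι} {x : H} (hx : x ∈ Submodule.span ℝ (v '' s)) :
    ∑ i ∈ s, ⟪v i, x⟫ • v i = x := by
  classical
  let b := OrthonormalBasis.span hv s
  have hx' : x ∈ Submodule.span ℝ (s.image v : Set H) := by rwa [coe_image]
  have := congrArg Subtype.val (b.sum_repr' ⟨x, hx'⟩)
  simp only [Submodule.coe_sum, Submodule.coe_smul, Submodule.coe_inner, b,
    OrthonormalBasis.span_apply] at this
  rwa [sum_coe_sort s (fun i => ⟪v i, x⟫ • v i)] at this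

theorem Orthonormal.finrank_span_image {ι : Type*} {v : ι → H}
    (hv : Orthonormal ℝ v) (s : Finset ι) : finrank ℝ (Submodule.span ℝ (v '' s)) = s.card := by
  classical
  rw [← coe_image, finrank_eq_card_basis (OrthonormalBasis.span hv s).toBasis, Fintype.card_coe]

end

section

variable {D : Type*} [MeasurableSpace D] {ρ : Measure D}
  {H : Type*} [NormedAddCommGroup H] [InnerProductSpace ℝ H]

theorem sum_integral_sq_le_opNorm_sq [IsProbabilityMeasure ρ] {E : Type*}
    [NormedAddCommGroup E] [InnerProductSpace ℝ E] [FiniteDimensional ℝ E] {ι : Type*}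
    [Fintype ι] (b : OrthonormalBasis ι ℝ E) (T : E →L[ℝ] Lp ℝ ⊤ ρ) :
    ∑ i, ∫ x, T (b i) x ^ 2 ∂ρ ≤ ‖T‖ ^ 2 := by
  let G : D → E := fun x => ∑ i, T (b i) x • b i
  have hnormG : ∀ x, ‖G x‖ ^ 2 = ∑ i, T (b i) x ^ 2 := fun x => by
    rw [← real_inner_self_eq_norm_sq, b.orthonormal.inner_sum]
    simp only [conj_trivial, sq]
  have hinnerG : ∀ c, ∀ᵐ x ∂ρ, ⟪c, G x⟫ = T c x := fun c => by
    have hTc : T c = ∑ i, b.repr c i • T (b i) := by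
      conv_lhs => rw [← b.sum_repr c]
      simp only [map_sum, map_smul]
    rw [hTc]
    filter_upwards [Lp.coeFn_sum_smul univ (b.repr c ·) (fun i => T (b i))] with x hx
    rw [hx, inner_sum]
    refine sum_congr rfl fun i _ => ?_
    rw [inner_smul_right, b.repr_apply_apply, real_inner_comm, mul_comm]
  -- The null set off which `⟪c, G x⟫ ≤ ‖T‖ * ‖c‖` holds depends on `c`, so we only test
  -- countably many `c`.
  obtain ⟨s, hsc, hsd⟩ := TopologicalSpace.exists_countable_dense E
  have hG : ∀ᵐ x ∂ρ, ‖G x‖ ≤ ‖T‖ := by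
    have hs : ∀ᵐ x ∂ρ, ∀ c ∈ s, ⟪c, G x⟫ ≤ ‖T‖ * ‖c‖ := by
      refine (ae_ball_iff hsc).2 fun c _ => ?_
      filter_upwards [hinnerG c, Lp.ae_norm_le_norm_top (T c)] with x hx hTc
      rw [hx]
      exact (le_abs_self _).trans (hTc.trans (T.le_opNorm c))
    filter_upwards [hs] with x hx
    exact norm_le_of_dense_inner_le hsd (norm_nonneg T) hx
  have hint : ∀ i, Integrable (fun x => T (b i) x ^ 2) ρ := fun i => by
    simpa only [sq] using Lp.integrable_mul_top (T (b i)) (T (b i))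
  calc ∑ i, ∫ x, T (b i) x ^ 2 ∂ρ = ∫ x, ‖G x‖ ^ 2 ∂ρ := by
        rw [← integral_finsetSum _ fun i _ => hint i]
        simp only [hnormG]
    _ ≤ ∫ _, ‖T‖ ^ 2 ∂ρ := by
        refine integral_mono_ae ?_ (integrable_const _) ?_
        · simpa only [hnormG] using integrable_finsetSum _ fun i _ => hint i
        · filter_upwards [hG] with x hx
          exact pow_le_pow_left₀ (norm_nonneg _) hx 2
    _ = ‖T‖ ^ 2 := by simp

theorem sum_Ico_le_sum_integral_sq [IsFiniteMeasure ρ] {ψ : ℕ → H} (hψ : Orthonormal ℝ ψ)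
    (J : H →L[ℝ] Lp ℝ ⊤ ρ) (horth : ∀ k l, k ≠ l → ∫ x, J (ψ k) x * J (ψ l) x ∂ρ = 0)
    (hanti : Antitone fun k => ∫ x, J (ψ k) x ^ 2 ∂ρ) {n m : ℕ} {ι : Type*} [Fintype ι]
    {e : ι → H} (he : Orthonormal ℝ e)
    (hspan : ∀ j, e j ∈ Submodule.span ℝ (ψ '' ↑(range (n + m))))
    (hcard : m ≤ Fintype.card ι) :
    ∑ k ∈ Ico n (n + m), ∫ x, J (ψ k) x ^ 2 ∂ρ ≤ ∑ j, ∫ x, J (e j) x ^ 2 ∂ρ := by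
  set s : ℕ → ℝ := fun k => ∫ x, J (ψ k) x ^ 2 ∂ρ
  set t : ℕ → ℝ := fun k => ∑ j, ⟪ψ k, e j⟫ ^ 2
  have hexpand : ∀ j, ∑ k ∈ range (n + m), ⟪ψ k, e j⟫ • ψ k = e j :=
    fun j => hψ.sum_inner_smul_eq_of_mem_span (hspan j)
  have hJe : ∀ j, ∫ x, J (e j) x ^ 2 ∂ρ = ∑ k ∈ range (n + m), ⟪ψ k, e j⟫ ^ 2 * s k := by
    intro j
    conv_lhs => rw [← hexpand j, map_sum]
    simp only [map_smul]
    exact Lp.integral_sq_sum_smul _ _ _ horth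
  have hparseval : ∀ j, ∑ k ∈ range (n + m), ⟪ψ k, e j⟫ ^ 2 = 1 := by
    intro j
    calc ∑ k ∈ range (n + m), ⟪ψ k, e j⟫ ^ 2
        = ⟪∑ k ∈ range (n + m), ⟪ψ k, e j⟫ • ψ k, e j⟫ := by
          simp only [sum_inner, real_inner_smul_left, sq]
      _ = 1 := by rw [hexpand j, real_inner_self_eq_norm_sq, he.1 j, one_pow]
  have ht1 : ∀ k, t k ≤ 1 := by
    intro k
    have hbessel := he.sum_inner_products_le (ψ k) (s := univ)
    rw [hψ.1 k, one_pow] at hbessel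
    simpa only [real_inner_comm, Real.norm_eq_abs, sq_abs] using hbessel
  have htsum : ∑ k ∈ range (n + m), t k = Fintype.card ι := by
    simp only [t]
    rw [sum_comm, sum_congr rfl fun j _ => hparseval j]
    simp
  calc ∑ k ∈ Ico n (n + m), s k ≤ ∑ k ∈ range (n + m), t k * s k :=
        sum_Ico_le_sum_mul_of_antitone hanti (integral_nonneg fun _ => sq_nonneg _)
          (fun k => sum_nonneg fun j _ => sq_nonneg _) ht1
          (htsum ▸ by exact_mod_cast hcard)
    _ = ∑ j, ∫ x, J (e j) x ^ 2 ∂ρ := by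
        simp only [hJe, t, sum_mul]
        exact sum_comm

theorem sum_integral_sq_le_sq_of_norm_le [IsProbabilityMeasure ρ] {ψ : ℕ → H}
    (hψ : Orthonormal ℝ ψ) (J : H →L[ℝ] Lp ℝ ⊤ ρ)
    (horth : ∀ k l, k ≠ l → ∫ x, J (ψ k) x * J (ψ l) x ∂ρ = 0)
    (hanti : Antitone fun k => ∫ x, J (ψ k) x ^ 2 ∂ρ) {n : ℕ} (L : Fin n → H →L[ℝ] ℝ)
    {M : ℝ} (hM : ∀ f, ‖f‖ ≤ 1 → (∀ i, L i f = 0) → ‖J f‖ ≤ M) (m : ℕ) :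
    ∑ k ∈ range m, ∫ x, J (ψ (n + k)) x ^ 2 ∂ρ ≤ M ^ 2 := by
  let V := Submodule.span ℝ (ψ '' ↑(range (n + m)))
  have : FiniteDimensional ℝ V :=
    FiniteDimensional.span_of_finite ℝ ((range (n + m)).finite_toSet.image ψ)
  let N := V ⊓ ⨅ i, LinearMap.ker (L i : H →ₗ[ℝ] ℝ)
  have : FiniteDimensional ℝ N := Submodule.finiteDimensional_of_le inf_le_left
  have hdim : m ≤ finrank ℝ N := by
    have := V.finrank_le_finrank_inf_iInf_ker_add fun i => (L i : H →ₗ[ℝ] ℝ)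
    rw [hψ.finrank_span_image, card_range] at this
    exact le_of_add_le_add_left (this.trans_eq (add_comm _ _))
  have hM0 : 0 ≤ M := (norm_nonneg _).trans (hM 0 (by simp) (by simp))
  have hT : ‖J.comp N.subtypeL‖ ≤ M := by
    refine ContinuousLinearMap.opNorm_le_of_unit_norm hM0 fun f hf => hM f hf.le fun i => ?_
    simpa using Submodule.mem_iInf _ |>.1 (Submodule.mem_inf.1 f.2).2 i
  let b := stdOrthonormalBasis ℝ N
  calc ∑ k ∈ range m, ∫ x, J (ψ (n + k)) x ^ 2 ∂ρ
      = ∑ k ∈ Ico n (n + m), ∫ x, J (ψ k) x ^ 2 ∂ρ := by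
        rw [sum_Ico_eq_sum_range, add_tsub_cancel_left]
    _ ≤ ∑ j, ∫ x, J (b j) x ^ 2 ∂ρ :=
        sum_Ico_le_sum_integral_sq hψ J horth hanti
          (b.orthonormal.comp_linearIsometry N.subtypeₗᵢ) (fun j => (b j).2.1)
          (by simpa using hdim)
    _ ≤ ‖J.comp N.subtypeL‖ ^ 2 := sum_integral_sq_le_opNorm_sq b (J.comp N.subtypeL)
    _ ≤ M ^ 2 := by gcongr

end

theorem norm_le_max_norm_sub_norm_neg_sub {F : Type*} [NormedAddCommGroup F] [NormedSpace ℝ F]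
    (u z : F) : ‖u‖ ≤ max ‖u - z‖ ‖-u - z‖ := by
  have h : ‖(2 : ℝ) • u‖ ≤ ‖u - z‖ + ‖-u - z‖ := by
    rw [show (2 : ℝ) • u = (u - z) - (-u - z) by module]
    exact norm_sub_le _ _
  rw [norm_smul, Real.norm_two] at h
  linarith [le_max_left ‖u - z‖ ‖-u - z‖, le_max_right ‖u - z‖ ‖-u - z‖]

theorem ofReal_norm_le_iSup_of_forall_eq_zero {H F : Type*} [NormedAddCommGroup H]
    [NormedSpace ℝ H] [NormedAddCommGroup F] [NormedSpace ℝ F] {n : ℕ} (J : H →L[ℝ] F)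
    (L : Fin n → H →L[ℝ] ℝ) (φ : (Fin n → ℝ) → F) {f : H} (hf : ‖f‖ ≤ 1)
    (hLf : ∀ i, L i f = 0) :
    ENNReal.ofReal ‖J f‖ ≤ ⨆ (g : H) (_ : ‖g‖ ≤ 1), ENNReal.ofReal ‖J g - φ (fun i => L i g)‖ := by
  have hinfo : (fun i => L i f) = fun i => L i (-f) := funext fun i => by simp [hLf i]
  calc ENNReal.ofReal ‖J f‖
      ≤ ENNReal.ofReal (max ‖J f - φ (fun i => L i f)‖ ‖J (-f) - φ (fun i => L i (-f))‖) := by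
        rw [map_neg, ← hinfo]
        exact ENNReal.ofReal_le_ofReal (norm_le_max_norm_sub_norm_neg_sub _ _)
    _ ≤ _ := by
        rw [ENNReal.ofReal_max]
        exact max_le (le_iSup₂_of_le f hf le_rfl) (le_iSup₂_of_le (-f) (by rwa [norm_neg]) le_rfl)

theorem stmt7_general
    {D : Type*} [MeasurableSpace D] (ρ : Measure D) [IsProbabilityMeasure ρ]
    {H : Type*} [NormedAddCommGroup H] [InnerProductSpace ℝ H]
    (ψ : HilbertBasis ℕ ℝ H)
    (J : H →L[ℝ] Lp ℝ ⊤ ρ)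
    (horth : ∀ k l : ℕ, k ≠ l → ∫ x, (J (ψ k)) x * (J (ψ l)) x ∂ρ = 0)
    (σ : ℕ → ℝ) (hσ : ∀ k, σ k = Real.sqrt (∫ x, ((J (ψ k)) x) ^ 2 ∂ρ))
    (hmono : Antitone σ)
    (n : ℕ) (L : Fin n → H →L[ℝ] ℝ) (φ : (Fin n → ℝ) → Lp ℝ ⊤ ρ) :
    (∑' k : ℕ, ENNReal.ofReal (σ (n + k) ^ 2)) ^ (1/2 : ℝ)
      ≤ ⨆ (f : H) (_ : ‖f‖ ≤ 1),
          ENNReal.ofReal ‖J f - φ (fun i => L i f)‖ := by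
  set E := ⨆ (f : H) (_ : ‖f‖ ≤ 1), ENNReal.ofReal ‖J f - φ (fun i => L i f)‖
  rcases eq_or_ne E ⊤ with hE | hE
  · exact hE ▸ le_top
  have hsq : ∀ k, ∫ x, J (ψ k) x ^ 2 ∂ρ = σ k ^ 2 := fun k => by
    rw [hσ k, Real.sq_sqrt (integral_nonneg fun _ => sq_nonneg _)]
  have hanti : Antitone fun k => ∫ x, J (ψ k) x ^ 2 ∂ρ := fun k l hkl => by
    simp only [hsq]
    exact pow_le_pow_left₀ (hσ l ▸ Real.sqrt_nonneg _) (hmono hkl) 2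
  have hker : ∀ f : H, ‖f‖ ≤ 1 → (∀ i, L i f = 0) → ‖J f‖ ≤ E.toReal := fun f hf hLf =>
    (ENNReal.ofReal_le_iff_le_toReal hE).1 (ofReal_norm_le_iSup_of_forall_eq_zero J L φ hf hLf)
  have htail : ∑' k, ENNReal.ofReal (σ (n + k) ^ 2) ≤ E ^ 2 := by
    refine ENNReal.tsum_le_of_sum_range_le fun m => ?_
    rw [← ENNReal.ofReal_sum_of_nonneg fun k _ => sq_nonneg _, ← ENNReal.ofReal_toReal hE,
      ← ENNReal.ofReal_pow ENNReal.toReal_nonneg]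
    refine ENNReal.ofReal_le_ofReal ?_
    simpa only [hsq] using sum_integral_sq_le_sq_of_norm_le ψ.orthonormal J horth hanti L hker m
  rw [one_div, ENNReal.rpow_inv_le_iff two_pos, ENNReal.rpow_two]
  exact htail

/-- Lower bound for deterministic `L∞(ρ)`-approximation on the
unit ball of a separable Hilbert space `H` continuously embedded in `L∞(ρ)` by
`J`: if the images `J ψ_k` of an orthonormal basis are pairwise orthogonal in
`L₂(ρ)` with nonincreasing singular values `σ_k = ‖J ψ_k‖_{L₂(ρ)}`, then any
deterministic method using `n` continuous linear functionals has worst-case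
error at least `√(Σ_{k ≥ n} σ_k²)` (the tail after removing the `n` largest
singular values). -/
theorem stmt7
    {D : Type*} [MeasurableSpace D] (ρ : Measure D) [IsProbabilityMeasure ρ]
    {H : Type*} [NormedAddCommGroup H] [InnerProductSpace ℝ H]
    (ψ : HilbertBasis ℕ ℝ H)
    (J : H →L[ℝ] Lp ℝ ⊤ ρ) (hJinj : Function.Injective J)
    (horth : ∀ k l : ℕ, k ≠ l → ∫ x, (J (ψ k)) x * (J (ψ l)) x ∂ρ = 0)
    (σ : ℕ → ℝ) (hσ : ∀ k, σ k = Real.sqrt (∫ x, ((J (ψ k)) x) ^ 2 ∂ρ))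
    (hmono : Antitone σ)
    (n : ℕ) (L : Fin n → H →L[ℝ] ℝ) (φ : (Fin n → ℝ) → Lp ℝ ⊤ ρ) :
    (∑' k : ℕ, ENNReal.ofReal (σ (n + k) ^ 2)) ^ (1/2 : ℝ)
      ≤ ⨆ (f : H) (_ : ‖f‖ ≤ 1),
          ENNReal.ofReal ‖J f - φ (fun i => L i f)‖ :=
  stmt7_general ρ ψ J horth σ hσ hmono n L φ
end

section
/- There exists a universal constant C > 0 (one may take C = 4√2) with the following property. Let T be a nonempty finite set, m ∈ ℕ, a : T → ℝ^m, let X be a standard Gaussian random vector in ℝ^m, and set Ψ_t := ⟨a_t, X⟩ for t ∈ T (a centered jointly Gaussian family). Define the canonical pseudometric ρ(s,t) := ‖a_s − a_t‖₂ = √(E(Ψ_s − Ψ_t)²), and for r > 0 let N(r) be the minimal cardinality of a subset S ⊆ T such that every t ∈ T satisfies ρ(t,s) ≤ r for some s ∈ S. Then E[ max_{t∈T} Ψ_t ] ≤ C · ∫₀^∞ √( log N(r) ) dr. -/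
/-!
Chaining. With `ε k = diam T / 2 ^ k`, choose maps `p k : T → T` onto `ε k`-nets of size at most
`N (ε k)`; the coarsest net is a single point `s₀`. Telescoping
`X t = X s₀ + ∑_{k < J} (X (p (k+1) t) - X (p k t)) + (X t - X (p J t))`
bounds `E max_t X t` by a sum of expected maxima of at most `N (ε (k+1)) ^ 2` increments, each
sub-Gaussian with variance proxy `(3 ε (k+1)) ^ 2`. The bound `E max_{i ≤ n} Y i ≤ σ √(2 log n)`
(Jensen and a union bound on `exp (λ Y i)`) gives `6 ε (k+1) √(log N (ε (k+1)))` per level; since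
`N` is antitone this sum is at most `12 ∫ √(log N)`, and the last term vanishes as `J → ∞`.
For `Ψ t = ⟪a t, X⟫` the increments are centred Gaussians of variance `‖a s - a t‖ ^ 2`.
-/

open MeasureTheory ProbabilityTheory Real Finset Filter Topology
open scoped NNReal RealInnerProductSpace

lemma le_sqrt_of_forall_pos_mul_le {x L c : ℝ} (hL : 0 ≤ L) (hc : 0 ≤ c)
    (h : ∀ l > 0, l * x ≤ L + c * l ^ 2 / 2) : x ≤ √(2 * c * L) := by
  by_contra! hx
  have hx0 : 0 < x := (sqrt_nonneg _).trans_lt hx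
  rcases hc.eq_or_lt with rfl | hc
  · have := h ((L + 1) / x) (by positivity)
    rw [div_mul_cancel₀ _ hx0.ne'] at this
    linarith
  · have := h (x / c) (by positivity)
    have hsq : x ^ 2 ≤ 2 * c * L := by
      field_simp at this
      nlinarith
    exact hx.not_ge (le_sqrt_of_sq_le hsq)

lemma sum_sub_mul_le_intervalIntegral_of_antitoneOn {g : ℝ → ℝ} (hg : AntitoneOn g (Set.Ici 0))
    {ε : ℕ → ℝ} (hε : Antitone ε) (hε0 : ∀ k, 0 ≤ ε k) (n : ℕ) :
    ∑ k ∈ range n, (ε k - ε (k + 1)) * g (ε k) ≤ ∫ r in ε n..ε 0, g r := by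
  have hint : ∀ a b, 0 ≤ a → 0 ≤ b → IntervalIntegrable g volume a b := fun a b ha hb ↦
    (hg.mono fun r hr ↦ (le_min ha hb).trans hr.1).intervalIntegrable
  have hsplit : ∫ r in ε n..ε 0, g r = ∑ k ∈ range n, ∫ r in ε (k + 1)..ε k, g r := by
    rw [intervalIntegral.integral_symm, ← intervalIntegral.sum_integral_adjacent_intervals
      fun k _ ↦ hint _ _ (hε0 k) (hε0 (k + 1)), ← Finset.sum_neg_distrib]
    exact Finset.sum_congr rfl fun k _ ↦ (intervalIntegral.integral_symm _ _).symm
  rw [hsplit]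
  refine Finset.sum_le_sum fun k _ ↦ ?_
  calc (ε k - ε (k + 1)) * g (ε k) = ∫ _ in ε (k + 1)..ε k, g (ε k) := by simp
    _ ≤ ∫ r in ε (k + 1)..ε k, g r :=
      intervalIntegral.integral_mono_on (hε k.le_succ) intervalIntegrable_const
        (hint _ _ (hε0 (k + 1)) (hε0 k)) fun r hr ↦
          hg ((hε0 (k + 1)).trans hr.1) (hε0 k) hr.2

namespace MeasureTheory

lemma integrable_finset_sup' {Ω ι : Type*} {mΩ : MeasurableSpace Ω} {μ : Measure Ω}
    {s : Finset ι} (hs : s.Nonempty) {Y : ι → Ω → ℝ} (h : ∀ i ∈ s, Integrable (Y i) μ) :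
    Integrable (fun ω ↦ s.sup' hs (Y · ω)) μ := by
  simp_rw [← Finset.sup'_apply]
  exact Finset.sup'_induction (p := (Integrable · μ)) hs Y (fun _ h₁ _ h₂ ↦ h₁.sup h₂) h

end MeasureTheory

namespace ProbabilityTheory

variable {Ω ι : Type*} {mΩ : MeasurableSpace Ω} {μ : Measure Ω}

lemma HasSubgaussianMGF.mono {X : Ω → ℝ} {c c' : ℝ≥0} (h : HasSubgaussianMGF X c μ)
    (hc : c ≤ c') : HasSubgaussianMGF X c' μ where
  integrable_exp_mul := h.integrable_exp_mul
  mgf_le t := (h.mgf_le t).trans (exp_le_exp.mpr (by gcongr))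

theorem integral_finset_sup'_le_of_hasSubgaussianMGF [IsProbabilityMeasure μ] {s : Finset ι}
    (hs : s.Nonempty) {Y : ι → Ω → ℝ} {c : ℝ≥0} (h : ∀ i ∈ s, HasSubgaussianMGF (Y i) c μ) :
    ∫ ω, s.sup' hs (Y · ω) ∂μ ≤ √(2 * c * log #s) := by
  refine le_sqrt_of_forall_pos_mul_le (log_natCast_nonneg _) c.2 fun l hl ↦ ?_
  set M := fun ω ↦ s.sup' hs (Y · ω)
  have hM : Integrable M μ := integrable_finset_sup' hs fun i hi ↦ (h i hi).integrable
  have hsum : Integrable (fun ω ↦ ∑ i ∈ s, exp (l * Y i ω)) μ :=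
    integrable_finsetSum s fun i hi ↦ (h i hi).integrable_exp_mul l
  have hexp_le : ∀ ω, exp (l * M ω) ≤ ∑ i ∈ s, exp (l * Y i ω) := fun ω ↦ by
    obtain ⟨i, hi, hMi⟩ := Finset.exists_mem_eq_sup' hs (Y · ω)
    rw [show M ω = Y i ω from hMi]
    exact Finset.single_le_sum (f := fun i ↦ exp (l * Y i ω)) (fun _ _ ↦ (exp_pos _).le) hi
  have hexp : Integrable (fun ω ↦ exp (l * M ω)) μ :=
    hsum.mono' (by fun_prop) (.of_forall fun ω ↦ by
      rw [norm_of_nonneg (exp_pos _).le]; exact hexp_le ω)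
  have hjensen : exp (∫ ω, l * M ω ∂μ) ≤ ∫ ω, exp (l * M ω) ∂μ :=
    convexOn_exp.map_integral_le continuousOn_exp isClosed_univ (.of_forall fun _ ↦ trivial)
      (hM.const_mul l) hexp
  rw [← exp_le_exp, exp_add, exp_log (by simp [hs.card_pos]), ← integral_const_mul]
  calc exp (∫ ω, l * M ω ∂μ) ≤ ∫ ω, ∑ i ∈ s, exp (l * Y i ω) ∂μ :=
        hjensen.trans (integral_mono hexp hsum hexp_le)
    _ = ∑ i ∈ s, mgf (Y i) μ l := integral_finsetSum s fun i hi ↦ (h i hi).integrable_exp_mul l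
    _ ≤ ∑ i ∈ s, exp (c * l ^ 2 / 2) := Finset.sum_le_sum fun i hi ↦ (h i hi).mgf_le l
    _ = #s * exp (c * l ^ 2 / 2) := by rw [Finset.sum_const, nsmul_eq_mul]

end ProbabilityTheory

section CoveringNumber

variable (T : Type*) [PseudoMetricSpace T]

/-- The internal covering number of `T` by closed `r`-balls, as `Metric.coveringNumber` but
`ℕ`-valued; it is `sInf ∅ = 0` when no finite cover exists, e.g. for `r < 0`. -/
noncomputable def natCoveringNumber (r : ℝ) : ℕ :=
  sInf {k | ∃ S : Finset T, #S = k ∧ ∀ t, ∃ s ∈ S, dist t s ≤ r}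

variable {T}

lemma natCoveringNumber_le_card_of_cover {r : ℝ} {S : Finset T}
    (hS : ∀ t, ∃ s ∈ S, dist t s ≤ r) : natCoveringNumber T r ≤ #S :=
  Nat.sInf_le ⟨S, rfl, hS⟩

variable [Fintype T]

lemma exists_map_dist_le_card_image_le [DecidableEq T] {r : ℝ} (hr : 0 ≤ r) :
    ∃ p : T → T, (∀ t, dist t (p t) ≤ r) ∧ #(univ.image p) ≤ natCoveringNumber T r := by
  obtain ⟨S, hS, hcover⟩ := Nat.sInf_mem
    (s := {k | ∃ S : Finset T, #S = k ∧ ∀ t, ∃ s ∈ S, dist t s ≤ r})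
    ⟨_, univ, rfl, fun t ↦ ⟨t, Finset.mem_univ t, by rwa [dist_self]⟩⟩
  choose p hpS hp using hcover
  refine ⟨p, hp, (Finset.card_le_card ?_).trans_eq hS⟩
  simpa [Finset.image_subset_iff] using hpS

lemma natCoveringNumber_antitoneOn : AntitoneOn (natCoveringNumber T) (Set.Ici 0) := by
  classical
  intro r hr r' _ hrr'
  obtain ⟨p, hp, hcard⟩ := exists_map_dist_le_card_image_le (T := T) hr
  exact (natCoveringNumber_le_card_of_cover fun t ↦
    ⟨p t, mem_image_of_mem p (Finset.mem_univ t), (hp t).trans hrr'⟩).trans hcard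

variable [Nonempty T]

lemma one_le_natCoveringNumber {r : ℝ} (hr : 0 ≤ r) : 1 ≤ natCoveringNumber T r := by
  classical
  obtain ⟨p, -, hp⟩ := exists_map_dist_le_card_image_le (T := T) hr
  exact le_trans (by simp) hp

lemma natCoveringNumber_le_one {r : ℝ} (hr : Metric.diam (Set.univ : Set T) ≤ r) :
    natCoveringNumber T r ≤ 1 := by
  obtain ⟨t₀⟩ := ‹Nonempty T›
  exact natCoveringNumber_le_card_of_cover (S := {t₀}) fun t ↦ ⟨t₀, mem_singleton_self t₀,
    (Metric.dist_le_diam_of_mem (Set.toFinite _).isBounded (Set.mem_univ t)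
      (Set.mem_univ t₀)).trans hr⟩

lemma antitoneOn_sqrt_log_natCoveringNumber :
    AntitoneOn (fun r ↦ √(log (natCoveringNumber T r))) (Set.Ici 0) := fun r hr r' hr' hrr' ↦
  sqrt_le_sqrt <| log_le_log (by exact_mod_cast one_le_natCoveringNumber hr')
    (by exact_mod_cast natCoveringNumber_antitoneOn hr hr' hrr')

lemma sqrt_log_natCoveringNumber_eq_zero {r : ℝ} (hr : Metric.diam (Set.univ : Set T) ≤ r) :
    √(log (natCoveringNumber T r)) = 0 := by
  have h1 : natCoveringNumber T r = 1 :=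
    (natCoveringNumber_le_one hr).antisymm (one_le_natCoveringNumber (Metric.diam_nonneg.trans hr))
  simp [h1]

lemma integrableOn_sqrt_log_natCoveringNumber :
    IntegrableOn (fun r ↦ √(log (natCoveringNumber T r))) (Set.Ioi 0) := by
  set D := Metric.diam (Set.univ : Set T)
  have hcompact : IntegrableOn (fun r ↦ √(log (natCoveringNumber T r))) (Set.Icc 0 D) :=
    antitoneOn_sqrt_log_natCoveringNumber.mono Set.Icc_subset_Ici_self |>.integrableOn_isCompact
      isCompact_Icc
  have htail : IntegrableOn (fun r ↦ √(log (natCoveringNumber T r))) (Set.Ioi D) :=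
    integrableOn_zero.congr_fun (fun r hr ↦ (sqrt_log_natCoveringNumber_eq_zero (le_of_lt hr)).symm)
      measurableSet_Ioi
  exact (hcompact.union htail).mono_set fun r hr ↦ by
    rcases le_or_gt r D with h | h
    exacts [Or.inl ⟨le_of_lt hr, h⟩, Or.inr h]

lemma sum_mul_sqrt_log_natCoveringNumber_le {ε : ℕ → ℝ} (hε : ∀ k, ε k = 2 * ε (k + 1))
    (hε0 : ∀ k, 0 ≤ ε k) (n : ℕ) :
    ∑ k ∈ range n, ε k * √(log (natCoveringNumber T (ε k)))
      ≤ 2 * ∫ r in Set.Ioi 0, √(log (natCoveringNumber T r)) := by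
  have hε_anti : Antitone ε := antitone_nat_of_succ_le fun k ↦ by linarith [hε k, hε0 (k + 1)]
  calc ∑ k ∈ range n, ε k * √(log (natCoveringNumber T (ε k)))
      = 2 * ∑ k ∈ range n, (ε k - ε (k + 1)) * √(log (natCoveringNumber T (ε k))) := by
        rw [Finset.mul_sum]
        exact Finset.sum_congr rfl fun k _ ↦ by rw [hε k]; ring
    _ ≤ 2 * ∫ r in ε n..ε 0, √(log (natCoveringNumber T r)) := by
        gcongr
        exact sum_sub_mul_le_intervalIntegral_of_antitoneOn antitoneOn_sqrt_log_natCoveringNumber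
          hε_anti hε0 n
    _ ≤ 2 * ∫ r in Set.Ioi 0, √(log (natCoveringNumber T r)) := by
        gcongr
        rw [intervalIntegral.integral_of_le (hε_anti n.zero_le)]
        exact setIntegral_mono_set integrableOn_sqrt_log_natCoveringNumber
          (.of_forall fun r ↦ sqrt_nonneg _) (.of_forall fun r hr ↦ (hε0 n).trans_lt hr.1)

end CoveringNumber

section Chaining

lemma sup'_univ_le_chaining_sum {T : Type*} [Fintype T] [Nonempty T] (f : T → ℝ)
    (p : ℕ → T → T) {s₀ : T} (hp0 : ∀ t, p 0 t = s₀) (J : ℕ) :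
    univ.sup' univ_nonempty f ≤ f s₀
      + ∑ k ∈ range J, univ.sup' univ_nonempty (fun t ↦ f (p (k + 1) t) - f (p k t))
      + univ.sup' univ_nonempty (fun t ↦ f t - f (p J t)) := by
  refine Finset.sup'_le _ _ fun t _ ↦ ?_
  have htelescope : f t = f s₀ + ∑ k ∈ range J, (f (p (k + 1) t) - f (p k t))
      + (f t - f (p J t)) := by
    rw [Finset.sum_range_sub (fun k ↦ f (p k t)), hp0]
    ring
  rw [htelescope]
  gcongr with k
  · exact Finset.le_sup' (fun t ↦ f (p (k + 1) t) - f (p k t)) (Finset.mem_univ t)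
  · exact Finset.le_sup' (fun t ↦ f t - f (p J t)) (Finset.mem_univ t)

variable {Ω T : Type*} {mΩ : MeasurableSpace Ω} {μ : Measure Ω} [IsProbabilityMeasure μ]
  [PseudoMetricSpace T] [Fintype T] [Nonempty T] {X : T → Ω → ℝ}

lemma integral_sup'_sub_le_of_dist_le [DecidableEq T]
    (hX : ∀ s t, HasSubgaussianMGF (fun ω ↦ X s ω - X t ω) (nndist s t ^ 2) μ)
    (p q : T → T) {δ : ℝ} (hpq : ∀ t, dist (p t) (q t) ≤ δ) {n : ℕ}
    (hn : #(univ.image p) * #(univ.image q) ≤ n) :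
    ∫ ω, univ.sup' univ_nonempty (fun t ↦ X (p t) ω - X (q t) ω) ∂μ ≤ δ * √(2 * log n) := by
  obtain ⟨t₀⟩ := ‹Nonempty T›
  have hδ : 0 ≤ δ := dist_nonneg.trans (hpq t₀)
  set Q := univ.image fun t ↦ (p t, q t)
  have hQ : Q.Nonempty := univ_nonempty.image _
  have hQcard : #Q ≤ n := by
    refine le_trans ?_ hn
    rw [← Finset.card_product]
    refine Finset.card_le_card fun x hx ↦ ?_
    obtain ⟨t, -, rfl⟩ := Finset.mem_image.mp hx
    exact Finset.mem_product.mpr ⟨mem_image_of_mem p (mem_univ t), mem_image_of_mem q (mem_univ t)⟩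
  have hsub : ∀ x ∈ Q, HasSubgaussianMGF (fun ω ↦ X x.1 ω - X x.2 ω) (δ.toNNReal ^ 2) μ := by
    intro x hx
    obtain ⟨t, -, rfl⟩ := Finset.mem_image.mp hx
    refine (hX _ _).mono (pow_le_pow_left₀ bot_le ?_ 2)
    exact (Real.le_toNNReal_iff_coe_le hδ).mpr (by simpa using hpq t)
  calc ∫ ω, univ.sup' univ_nonempty (fun t ↦ X (p t) ω - X (q t) ω) ∂μ
      = ∫ ω, Q.sup' hQ (fun x ↦ X x.1 ω - X x.2 ω) ∂μ := by
        simp only [Q, Finset.sup'_image]; rfl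
    _ ≤ √(2 * (δ.toNNReal ^ 2 : ℝ≥0) * log #Q) :=
        integral_finset_sup'_le_of_hasSubgaussianMGF hQ hsub
    _ ≤ δ * √(2 * log n) := by
        rw [NNReal.coe_pow, Real.coe_toNNReal _ hδ, mul_comm 2, mul_assoc, sqrt_mul (sq_nonneg δ),
          sqrt_sq hδ]
        gcongr

lemma integral_sup'_sub_le_of_consecutive_nets [DecidableEq T]
    (hX : ∀ s t, HasSubgaussianMGF (fun ω ↦ X s ω - X t ω) (nndist s t ^ 2) μ)
    {r : ℝ} (hr : 0 ≤ r) {p q : T → T} (hp : ∀ t, dist t (p t) ≤ r)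
    (hq : ∀ t, dist t (q t) ≤ 2 * r) (hpcard : #(univ.image p) ≤ natCoveringNumber T r)
    (hqcard : #(univ.image q) ≤ natCoveringNumber T (2 * r)) :
    ∫ ω, univ.sup' univ_nonempty (fun t ↦ X (p t) ω - X (q t) ω) ∂μ
      ≤ 6 * r * √(log (natCoveringNumber T r)) := by
  set N := natCoveringNumber T r
  have hdist : ∀ t, dist (p t) (q t) ≤ 3 * r := fun t ↦ by
    linarith [dist_triangle_left (p t) (q t) t, hp t, hq t]
  have hcard : #(univ.image p) * #(univ.image q) ≤ N ^ 2 := by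
    rw [sq]
    exact Nat.mul_le_mul hpcard <| hqcard.trans <|
      natCoveringNumber_antitoneOn hr (show 0 ≤ 2 * r by positivity) (by linarith)
  calc _ ≤ 3 * r * √(2 * log ((N ^ 2 : ℕ) : ℝ)) :=
        integral_sup'_sub_le_of_dist_le hX _ _ hdist hcard
    _ = 6 * r * √(log N) := by
      rw [Nat.cast_pow, log_pow, ← mul_assoc, show (2 : ℝ) * (2 : ℕ) = 2 ^ 2 by norm_num,
        sqrt_mul (by positivity), sqrt_sq (by norm_num)]
      ring

lemma integral_sup'_le_chaining_sum [DecidableEq T]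
    (hX : ∀ s t, HasSubgaussianMGF (fun ω ↦ X s ω - X t ω) (nndist s t ^ 2) μ)
    (hint : ∀ t, Integrable (X t) μ) (hmean : ∀ t, ∫ ω, X t ω ∂μ = 0)
    {ε : ℕ → ℝ} (hε : ∀ k, ε k = 2 * ε (k + 1)) (hε0 : ∀ k, 0 ≤ ε k)
    {p : ℕ → T → T} {s₀ : T} (hp0 : ∀ t, p 0 t = s₀) (hp : ∀ k t, dist t (p k t) ≤ ε k)
    (hpcard : ∀ k, #(univ.image (p k)) ≤ natCoveringNumber T (ε k)) (J : ℕ) :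
    ∫ ω, univ.sup' univ_nonempty (X · ω) ∂μ
      ≤ ε J * √(2 * log ((Fintype.card T ^ 2 : ℕ) : ℝ))
        + ∑ k ∈ range J, 6 * ε (k + 1) * √(log (natCoveringNumber T (ε (k + 1)))) := by
  have hint_incr : ∀ q q' : T → T, Integrable
      (fun ω ↦ univ.sup' univ_nonempty fun t ↦ X (q t) ω - X (q' t) ω) μ := fun q q' ↦
    integrable_finset_sup' _ fun t _ ↦ (hint _).sub (hint _)
  have hlast : ∫ ω, univ.sup' univ_nonempty (fun t ↦ X t ω - X (p J t) ω) ∂μ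
      ≤ ε J * √(2 * log ((Fintype.card T ^ 2 : ℕ) : ℝ)) := by
    refine integral_sup'_sub_le_of_dist_le hX id _ (hp J) ?_
    rw [sq]
    exact Nat.mul_le_mul (card_le_univ _) (card_le_univ _)
  have hsum_int : Integrable (fun ω ↦ ∑ k ∈ range J,
      univ.sup' univ_nonempty (fun t ↦ X (p (k + 1) t) ω - X (p k t) ω)) μ :=
    integrable_finsetSum _ fun k _ ↦ hint_incr _ _
  have hhead_int : Integrable (fun ω ↦ X s₀ ω + ∑ k ∈ range J,
      univ.sup' univ_nonempty (fun t ↦ X (p (k + 1) t) ω - X (p k t) ω)) μ :=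
    (hint s₀).add hsum_int
  have hlast_int : Integrable
      (fun ω ↦ univ.sup' univ_nonempty (fun t ↦ X t ω - X (p J t) ω)) μ := hint_incr id _
  calc ∫ ω, univ.sup' univ_nonempty (X · ω) ∂μ
      ≤ ∫ ω, (X s₀ ω
          + ∑ k ∈ range J, univ.sup' univ_nonempty (fun t ↦ X (p (k + 1) t) ω - X (p k t) ω)
          + univ.sup' univ_nonempty (fun t ↦ X t ω - X (p J t) ω)) ∂μ :=
        integral_mono (integrable_finset_sup' _ fun t _ ↦ hint t) (hhead_int.add hlast_int)
          fun ω ↦ sup'_univ_le_chaining_sum (X · ω) p hp0 J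
    _ = ∫ ω, univ.sup' univ_nonempty (fun t ↦ X t ω - X (p J t) ω) ∂μ
          + ∑ k ∈ range J,
            ∫ ω, univ.sup' univ_nonempty (fun t ↦ X (p (k + 1) t) ω - X (p k t) ω) ∂μ := by
        rw [integral_add hhead_int hlast_int, integral_add (hint s₀) hsum_int,
          integral_finsetSum _ fun k _ ↦ hint_incr _ _, hmean, zero_add, add_comm]
    _ ≤ _ := add_le_add hlast <| sum_le_sum fun k _ ↦
        integral_sup'_sub_le_of_consecutive_nets hX (hε0 _) (hp (k + 1)) (hε k ▸ hp k)
          (hpcard (k + 1)) (hε k ▸ hpcard k)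

theorem integral_iSup_le_dudley
    (hX : ∀ s t, HasSubgaussianMGF (fun ω ↦ X s ω - X t ω) (nndist s t ^ 2) μ)
    (hint : ∀ t, Integrable (X t) μ) (hmean : ∀ t, ∫ ω, X t ω ∂μ = 0) :
    ∫ ω, ⨆ t, X t ω ∂μ ≤ 12 * ∫ r in Set.Ioi 0, √(log (natCoveringNumber T r)) := by
  classical
  set D := Metric.diam (Set.univ : Set T)
  set ε : ℕ → ℝ := fun k ↦ D / 2 ^ k
  have hε0 : ∀ k, 0 ≤ ε k := fun k ↦ by positivity
  have hε : ∀ k, ε k = 2 * ε (k + 1) := fun k ↦ by simp only [ε, pow_succ]; field_simp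
  choose p hp hpcard using fun k ↦ exists_map_dist_le_card_image_le (T := T) (hε0 k)
  obtain ⟨t₀⟩ := ‹Nonempty T›
  have hp0 : ∀ t, p 0 t = p 0 t₀ := fun t ↦
    Finset.card_le_one.mp ((hpcard 0).trans (natCoveringNumber_le_one (by simp [ε, D]))) _
      (mem_image_of_mem _ (mem_univ t)) _ (mem_image_of_mem _ (mem_univ t₀))
  have hbound : ∀ J, ∫ ω, ⨆ t, X t ω ∂μ
      ≤ ε J * √(2 * log ((Fintype.card T ^ 2 : ℕ) : ℝ))
        + 12 * ∫ r in Set.Ioi 0, √(log (natCoveringNumber T r)) := fun J ↦ by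
    simp_rw [← Finset.sup'_univ_eq_ciSup]
    refine (integral_sup'_le_chaining_sum hX hint hmean hε hε0 hp0 hp hpcard J).trans ?_
    gcongr
    simp_rw [mul_assoc, ← mul_sum]
    linarith [sum_mul_sqrt_log_natCoveringNumber_le (T := T) (fun k ↦ hε (k + 1))
      (fun k ↦ hε0 (k + 1)) J]
  have hε_lim : Tendsto ε atTop (𝓝 0) :=
    tendsto_const_nhds.div_atTop (tendsto_pow_atTop_atTop_of_one_lt one_lt_two)
  have hlim := (hε_lim.mul_const √(2 * log ((Fintype.card T ^ 2 : ℕ) : ℝ))).add_const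
    (12 * ∫ r in Set.Ioi 0, √(log (natCoveringNumber T r)))
  rw [zero_mul, zero_add] at hlim
  exact ge_of_tendsto' hlim hbound

end Chaining

section Gaussian

variable {E : Type*} [NormedAddCommGroup E] [InnerProductSpace ℝ E] [FiniteDimensional ℝ E]
  [MeasurableSpace E] [BorelSpace E]

lemma hasSubgaussianMGF_id_gaussianReal (v : ℝ≥0) :
    HasSubgaussianMGF id v (gaussianReal 0 v) where
  integrable_exp_mul := integrable_exp_mul_gaussianReal
  mgf_le t := by simp [mgf_id_gaussianReal]

lemma map_inner_stdGaussian (v : E) :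
    (stdGaussian E).map (fun x ↦ ⟪v, x⟫) = gaussianReal 0 (‖v‖₊ ^ 2) := by
  have := IsGaussian.map_eq_gaussianReal (μ := stdGaussian E) (innerSL ℝ v)
  rw [integral_strongDual_stdGaussian, variance_dual_stdGaussian, innerSL_apply_norm] at this
  convert this using 2
  · ext; simp
  · ext; simp

lemma hasSubgaussianMGF_inner_stdGaussian (v : E) :
    HasSubgaussianMGF (fun x ↦ ⟪v, x⟫) (‖v‖₊ ^ 2) (stdGaussian E) := by
  rw [← HasSubgaussianMGF.id_map_iff (by fun_prop), map_inner_stdGaussian]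
  exact hasSubgaussianMGF_id_gaussianReal _

lemma integral_inner_stdGaussian (v : E) : ∫ x, ⟪v, x⟫ ∂stdGaussian E = 0 :=
  integral_strongDual_stdGaussian (innerSL ℝ v)

end Gaussian

/-- Dudley's metric-entropy bound for finite centered Gaussian
families `Ψ_t = ⟨a_t, X⟩`, `X` standard Gaussian in `ℝ^m`: there is a universal
constant `C > 0` such that
`E[max_t Ψ_t] ≤ C ∫₀^∞ √(log N(r)) dr`,
where `N(r)` is the covering number of the index set under the canonical
pseudometric `ρ(s,t) = ‖a_s − a_t‖₂`. -/
theorem stmt9 :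
    ∃ C : ℝ, 0 < C ∧
      ∀ (T : Type) (_ : Fintype T) (_ : Nonempty T)
        (m : ℕ) (a : T → EuclideanSpace ℝ (Fin m)),
        (∫ z : Fin m → ℝ,
            ⨆ t : T, (inner ℝ (a t) ((WithLp.equiv 2 (Fin m → ℝ)).symm z) : ℝ)
            ∂(Measure.pi fun _ => gaussianReal 0 1))
          ≤ C * ∫ r in Set.Ioi (0 : ℝ),
              Real.sqrt (Real.log
                ((sInf {k : ℕ | ∃ S : Finset T,
                  S.card = k ∧ ∀ t : T, ∃ s ∈ S, ‖a t - a s‖ ≤ r} : ℕ) : ℝ)) := by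
  refine ⟨12, by norm_num, fun T _ _ m a ↦ ?_⟩
  let _ : PseudoMetricSpace T := .induced a inferInstance
  have hdist : ∀ s t : T, dist s t = ‖a s - a t‖ := fun s t ↦ dist_eq_norm (a s) (a t)
  have hX : ∀ s t : T, HasSubgaussianMGF (fun x ↦ ⟪a s, x⟫ - ⟪a t, x⟫) (nndist s t ^ 2)
      (stdGaussian (EuclideanSpace ℝ (Fin m))) := fun s t ↦ by
    simp_rw [← inner_sub_left]
    convert hasSubgaussianMGF_inner_stdGaussian (a s - a t) using 2
    exact nndist_eq_nnnorm (a s) (a t)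
  calc _ = ∫ x, ⨆ t, ⟪a t, x⟫ ∂stdGaussian (EuclideanSpace ℝ (Fin m)) := by
        rw [← map_pi_eq_stdGaussian, integral_map (by fun_prop)
          (Measurable.iSup fun t ↦ by fun_prop).aestronglyMeasurable]
        rfl
    _ ≤ _ := integral_iSup_le_dudley hX (fun t ↦ (hasSubgaussianMGF_inner_stdGaussian _).integrable)
          fun t ↦ integral_inner_stdGaussian _
    _ = _ := by simp_rw [natCoveringNumber, hdist]
end

section
/- For every p ∈ (0,1] there exists a constant C > 0, depending only on p, with the following property. Let d ≥ 1, α > 0, R₀ ∈ (0, 1/2], and let K₁ : ℝ → ℝ be a 1-periodic even function with K₁(0) = 1, |K₁(t)| ≤ 1 for all t, and K₁(t) ≥ 1 − α · d_𝕋(t)^p whenever d_𝕋(t) ≤ R₀, where d_𝕋(t) := min_{k∈ℤ} |t − k| is the distance on the torus. Define on [0,1)^d the pseudometric ρ(x,y) := √( 2 − 2 ∏_{j=1}^d K₁(x_j − y_j) ) and let μ be the uniform probability measure on [0,1)^d. Then ∫₀^∞ sup_{x∈[0,1)^d} √( log( 1 / μ{ y : ρ(x,y) ≤ r } ) ) dr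 ≤ C · √( d·(1 + log d) ) · ( 1 + √α + √( −log(2R₀) ) ). -/
open MeasureTheory ProbabilityTheory
open scoped ENNReal NNReal

/-!
Since `|K₁| ≤ 1`, `1 - ∏ⱼ K₁(tⱼ) ≤ ∑ⱼ (1 - K₁(tⱼ))`, so the local lower bound on `K₁` puts the
sup-norm ball of radius `δ` around `x` inside the `ρ`-ball of radius `r` as soon as
`2 d α δ^p ≤ r²` and `δ ≤ R₀`. That ball meets the cube `[0,1)^d` in measure at least `δ^d`,
and choosing `δ = R₀ (r² / (4 d (1 + α)))^{1/p}` gives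
`log (1 / μ(B_ρ(x, r))) ≤ d log (1/δ) ≲ (1 + 1/p) d (1 + log d) (1 + α - log (2 R₀)) / r`
for `r ≤ 2`, while the `ρ`-ball is everything for `r ≥ 2` because `ρ ≤ 2`. The integrand is
therefore dominated by a multiple of `r^{-1/2}` on `(0, 2]` and vanishes beyond.
-/

/-- Distance to the nearest integer: the metric `d_𝕋` on the torus `𝕋 = ℝ/ℤ`,
evaluated at a difference `t`. -/
noncomputable def torusDist (t : ℝ) : ℝ := ⨅ k : ℤ, |t - (k : ℝ)|

/-- The uniform probability measure on `[0,1)^d`. -/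
noncomputable def cubeMeasure (d : ℕ) : Measure (Fin d → ℝ) :=
  Measure.pi fun _ => volume.restrict (Set.Ico (0 : ℝ) 1)

open Set Metric Real

lemma torusDist_nonneg (t : ℝ) : 0 ≤ torusDist t := le_ciInf fun _ => abs_nonneg _

lemma torusDist_le_abs (t : ℝ) : torusDist t ≤ |t| := by
  simpa [torusDist] using ciInf_le (f := fun k : ℤ => |t - k|) ⟨0, by rintro _ ⟨k, rfl⟩; positivity⟩ 0

lemma Real.iSup₂_le {ι : Sort*} {κ : ι → Sort*} {f : ∀ i, κ i → ℝ} {a : ℝ}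
    (h : ∀ i j, f i j ≤ a) (ha : 0 ≤ a) : ⨆ (i) (j), f i j ≤ a :=
  Real.iSup_le (fun i => Real.iSup_le (h i) ha) ha

lemma Finset.abs_prod_le_one {ι : Type*} (s : Finset ι) {a : ι → ℝ} (ha : ∀ i ∈ s, |a i| ≤ 1) :
    |∏ i ∈ s, a i| ≤ 1 := by
  rw [Finset.abs_prod]
  exact Finset.prod_le_one (fun i _ => abs_nonneg _) ha

lemma Finset.one_sub_prod_le_sum_one_sub {ι : Type*} (s : Finset ι) {a : ι → ℝ}
    (ha : ∀ i ∈ s, |a i| ≤ 1) : 1 - ∏ i ∈ s, a i ≤ ∑ i ∈ s, (1 - a i) := by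
  classical
  induction s using Finset.induction_on with
  | empty => simp
  | insert i s hi ih =>
    rw [Finset.prod_insert hi, Finset.sum_insert hi]
    have hai := (abs_le.mp (ha i (Finset.mem_insert_self i s))).2
    have hs : ∀ j ∈ s, |a j| ≤ 1 := fun j hj => ha j (Finset.mem_insert_of_mem hj)
    have hprod := (abs_le.mp (s.abs_prod_le_one hs)).2
    -- `1 - a P = (1 - a) + (1 - P) - (1 - a) (1 - P)`
    nlinarith [ih hs, mul_nonneg (sub_nonneg.2 hai) (sub_nonneg.2 hprod)]

lemma Real.sqrt_add_add_le {a b c : ℝ} (ha : 0 ≤ a) (hb : 0 ≤ b) (hc : 0 ≤ c) :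
    √(a + b + c) ≤ √a + √b + √c := by
  rw [Real.sqrt_le_iff]
  refine ⟨by positivity, ?_⟩
  nlinarith [Real.sq_sqrt ha, Real.sq_sqrt hb, Real.sq_sqrt hc, Real.sqrt_nonneg a,
    Real.sqrt_nonneg b, Real.sqrt_nonneg c]

noncomputable def kernelDist {ι : Type*} [Fintype ι] (K₁ : ℝ → ℝ) (x y : ι → ℝ) : ℝ :=
  √(2 - 2 * ∏ j, K₁ (x j - y j))

section kernelDist

variable {ι : Type*} [Fintype ι] {K₁ : ℝ → ℝ}

lemma kernelDist_le_two (hK : ∀ t, |K₁ t| ≤ 1) (x y : ι → ℝ) : kernelDist K₁ x y ≤ 2 := by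
  have hprod := (abs_le.mp (Finset.univ.abs_prod_le_one fun j _ => hK (x j - y j))).1
  rw [kernelDist, Real.sqrt_le_iff]
  constructor <;> linarith

lemma kernelDist_le_of_dist_le (hK : ∀ t, |K₁ t| ≤ 1) {p α R₀ δ r : ℝ} (hp : 0 ≤ p)
    (hα : 0 ≤ α) (hKlb : ∀ t, torusDist t ≤ R₀ → 1 - α * torusDist t ^ p ≤ K₁ t)
    (hδR₀ : δ ≤ R₀) (hr : 0 ≤ r) (hδr : 2 * Fintype.card ι * (α * δ ^ p) ≤ r ^ 2)
    {x y : ι → ℝ} (hxy : dist x y ≤ δ) : kernelDist K₁ x y ≤ r := by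
  have hcoord : ∀ j, 1 - K₁ (x j - y j) ≤ α * δ ^ p := fun j => by
    have hj : torusDist (x j - y j) ≤ δ :=
      (torusDist_le_abs _).trans ((dist_eq _ _).symm.trans_le ((dist_le_pi_dist x y j).trans hxy))
    have := hKlb _ (hj.trans hδR₀)
    have := mul_le_mul_of_nonneg_left (Real.rpow_le_rpow (torusDist_nonneg _) hj hp) hα
    linarith
  have hsum : 1 - ∏ j, K₁ (x j - y j) ≤ Fintype.card ι * (α * δ ^ p) := by
    have := Finset.sum_le_card_nsmul Finset.univ _ _ fun j _ => hcoord j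
    rw [nsmul_eq_mul, Finset.card_univ] at this
    exact (Finset.univ.one_sub_prod_le_sum_one_sub fun j _ => hK _).trans this
  rw [kernelDist, Real.sqrt_le_left hr]
  linarith

end kernelDist

instance isProbabilityMeasure_cubeMeasure (d : ℕ) : IsProbabilityMeasure (cubeMeasure d) :=
  ⟨by rw [cubeMeasure, ← pi_univ, Measure.pi_pi]; simp⟩

lemma ofReal_le_volume_closedBall_inter_Ico {x δ : ℝ} (hx : x ∈ Ico (0 : ℝ) 1) (hδ : 0 ≤ δ)
    (hδ1 : δ ≤ 1) : ENNReal.ofReal δ ≤ volume (closedBall x δ ∩ Ico 0 1) := by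
  -- a window of length `δ` inside `[0, 1)` and within `δ` of `x`
  set c := min x (1 - δ)
  have hc₁ : x - δ ≤ c := le_min (by linarith) (by linarith [hx.2])
  have hc₂ : 0 ≤ c := le_min hx.1 (by linarith)
  calc ENNReal.ofReal δ = volume (Ico c (c + δ)) := by rw [Real.volume_Ico, add_sub_cancel_left]
    _ ≤ _ := measure_mono fun y ⟨hy₁, hy₂⟩ => by
      rw [Real.closedBall_eq_Icc]
      exact ⟨⟨by linarith, by linarith [min_le_left x (1 - δ)]⟩, by linarith,
        by linarith [min_le_right x (1 - δ)]⟩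

lemma ofReal_pow_le_cubeMeasure_closedBall {d : ℕ} {x : Fin d → ℝ}
    (hx : x ∈ univ.pi fun _ => Ico (0 : ℝ) 1) {δ : ℝ} (hδ : 0 ≤ δ) (hδ1 : δ ≤ 1) :
    ENNReal.ofReal δ ^ d ≤ cubeMeasure d (closedBall x δ) := by
  rw [closedBall_pi x hδ, cubeMeasure, Measure.pi_pi]
  calc ENNReal.ofReal δ ^ d = ∏ _j : Fin d, ENNReal.ofReal δ := by simp
    _ ≤ _ := Finset.prod_le_prod' fun j _ => by
      rw [Measure.restrict_apply measurableSet_closedBall]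
      exact ofReal_le_volume_closedBall_inter_Ico (hx j (mem_univ j)) hδ hδ1

lemma Real.log_one_div_le_of_pow_le {δ m : ℝ} {n : ℕ} (hδ : 0 < δ) (hm : δ ^ n ≤ m) :
    log (1 / m) ≤ n * log (1 / δ) := by
  have := Real.log_le_log (pow_pos hδ n) hm
  rw [Real.log_pow] at this
  simp only [one_div, Real.log_inv]
  linarith

lemma log_one_div_cubeMeasure_le {d : ℕ} {K₁ : ℝ → ℝ} (hK : ∀ t, |K₁ t| ≤ 1) {p α R₀ δ r : ℝ}
    (hp : 0 ≤ p) (hα : 0 ≤ α) (hKlb : ∀ t, torusDist t ≤ R₀ → 1 - α * torusDist t ^ p ≤ K₁ t)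
    (hδ : 0 < δ) (hδR₀ : δ ≤ R₀) (hδ1 : δ ≤ 1) (hr : 0 ≤ r) (hδr : 2 * d * (α * δ ^ p) ≤ r ^ 2)
    {x : Fin d → ℝ} (hx : x ∈ univ.pi fun _ => Ico (0 : ℝ) 1) :
    log (1 / (cubeMeasure d {y | kernelDist K₁ x y ≤ r}).toReal) ≤ d * log (1 / δ) := by
  refine Real.log_one_div_le_of_pow_le hδ ?_
  have hball : closedBall x δ ⊆ {y | kernelDist K₁ x y ≤ r} := fun y hy =>
    kernelDist_le_of_dist_le hK hp hα hKlb hδR₀ hr (by simpa using hδr) (mem_closedBall'.mp hy)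
  calc δ ^ d = (ENNReal.ofReal δ ^ d).toReal := by simp [hδ.le]
    _ ≤ _ := ENNReal.toReal_mono (measure_ne_top _ _)
      ((ofReal_pow_le_cubeMeasure_closedBall hx hδ.le hδ1).trans (measure_mono hball))

lemma log_one_div_cubeMeasure_eq_zero {d : ℕ} {K₁ : ℝ → ℝ} (hK : ∀ t, |K₁ t| ≤ 1) {r : ℝ}
    (hr : 2 ≤ r) (x : Fin d → ℝ) :
    log (1 / (cubeMeasure d {y | kernelDist K₁ x y ≤ r}).toReal) = 0 := by
  have : {y | kernelDist K₁ x y ≤ r} = univ :=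
    eq_univ_of_forall fun y => (kernelDist_le_two hK x y).trans hr
  simp [this]

lemma exists_small_radius {d : ℕ} (hd : 1 ≤ d) {p α R₀ r : ℝ} (hp : 0 < p) (hα : 0 ≤ α)
    (hR₀ : 0 < R₀) (hR₀1 : R₀ ≤ 1) (hr : 0 < r) (hr2 : r ≤ 2) :
    ∃ δ, 0 < δ ∧ δ ≤ R₀ ∧ 2 * d * (α * δ ^ p) ≤ r ^ 2 ∧
      log (1 / δ) ≤ log (1 / R₀) + p⁻¹ * (log d + α + 4 / r) := by
  have hd' : (1 : ℝ) ≤ d := by exact_mod_cast hd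
  set u := r ^ 2 / (4 * d * (1 + α)) with hu
  have hu0 : 0 < u := by positivity
  have hu1 : u ≤ 1 := by rw [hu, div_le_one (by positivity)]; nlinarith
  have hs0 : 0 < u ^ p⁻¹ := Real.rpow_pos_of_pos hu0 _
  have hs1 : u ^ p⁻¹ ≤ 1 := Real.rpow_le_one hu0.le hu1 (inv_nonneg.mpr hp.le)
  refine ⟨R₀ * u ^ p⁻¹, by positivity, mul_le_of_le_one_right hR₀.le hs1, ?_, ?_⟩
  · rw [Real.mul_rpow hR₀.le hs0.le, Real.rpow_inv_rpow hu0.le hp.ne']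
    have hR₀p : R₀ ^ p ≤ 1 := Real.rpow_le_one hR₀.le hR₀1 hp.le
    calc 2 * d * (α * (R₀ ^ p * u)) ≤ 2 * d * (α * u) := by
          gcongr; exact mul_le_of_le_one_left hu0.le hR₀p
      _ = r ^ 2 * (α / (2 * (1 + α))) := by rw [hu]; field_simp; ring
      _ ≤ r ^ 2 := mul_le_of_le_one_right (sq_nonneg r) (by rw [div_le_one (by positivity)]; linarith)
  · have hinv_u : 1 / u = d * (1 + α) * (2 / r) ^ 2 := by rw [hu]; field_simp; ring
    have hlog_u : log (1 / u) ≤ log d + α + 4 / r := by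
      have h₁ := Real.log_le_sub_one_of_pos (by positivity : 0 < 1 + α)
      have h₂ := Real.log_le_sub_one_of_pos (by positivity : 0 < 2 / r)
      rw [hinv_u, Real.log_mul (by positivity) (by positivity),
        Real.log_mul (by positivity) (by positivity), Real.log_pow]
      push_cast
      linarith [show 4 / r = 2 * (2 / r) by ring]
    rw [one_div, Real.log_inv] at hlog_u
    simp only [one_div, Real.log_inv, Real.log_mul hR₀.ne' hs0.ne', Real.log_rpow hu0]
    linarith [mul_le_mul_of_nonneg_left hlog_u (inv_nonneg.mpr hp.le)]

lemma log_one_div_cubeMeasure_le_div {d : ℕ} (hd : 1 ≤ d) {K₁ : ℝ → ℝ} (hK : ∀ t, |K₁ t| ≤ 1)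
    {p α R₀ r : ℝ} (hp : 0 < p) (hα : 0 ≤ α) (hR₀ : 0 < R₀) (hR₀2 : R₀ ≤ 1 / 2)
    (hKlb : ∀ t, torusDist t ≤ R₀ → 1 - α * torusDist t ^ p ≤ K₁ t) (hr : 0 < r) (hr2 : r ≤ 2)
    {x : Fin d → ℝ} (hx : x ∈ univ.pi fun _ => Ico (0 : ℝ) 1) :
    log (1 / (cubeMeasure d {y | kernelDist K₁ x y ≤ r}).toReal) ≤
      8 * ((1 + p⁻¹) * (d * (1 + log d)) * (1 + α + -log (2 * R₀))) / r := by
  obtain ⟨δ, hδ, hδR₀, hδr, hlogδ⟩ := exists_small_radius hd hp hα hR₀ (by linarith) hr hr2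
  have hmeas := log_one_div_cubeMeasure_le hK hp.le hα hKlb hδ hδR₀ (by linarith) hr.le hδr hx
  set L := -log (2 * R₀)
  have hL : 0 ≤ L := neg_nonneg.mpr (Real.log_nonpos (by positivity) (by linarith))
  have hlogR₀ : log (1 / R₀) ≤ 1 + L := by
    have := Real.log_le_sub_one_of_pos (two_pos : (0 : ℝ) < 2)
    rw [one_div, Real.log_inv]
    simp only [L, Real.log_mul two_ne_zero hR₀.ne']
    linarith
  have hd' : (1 : ℝ) ≤ d := by exact_mod_cast hd
  have hlogd : 0 ≤ log d := Real.log_nonneg hd'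
  set P := (1 + log d) * (1 + α + L)
  have hP₁ : 1 + L ≤ P := by nlinarith
  have hP₂ : log d + α ≤ P := by nlinarith
  have hr' : 1 ≤ 2 / r := by rw [le_div_iff₀ hr]; linarith
  have hP : 1 ≤ P := by linarith
  have hlogδ' : log (1 / δ) ≤ P * (2 / r) + p⁻¹ * (P * (2 / r) + P * (4 / r)) := by
    have h₁ : 1 + L ≤ P * (2 / r) := hP₁.trans (le_mul_of_one_le_right (by linarith) hr')
    have h₂ : log d + α ≤ P * (2 / r) := hP₂.trans (le_mul_of_one_le_right (by linarith) hr')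
    have h₃ : 4 / r ≤ P * (4 / r) := le_mul_of_one_le_left (by positivity) hP
    have := mul_le_mul_of_nonneg_left (add_le_add h₂ h₃) (inv_nonneg.mpr hp.le)
    linarith
  calc _ ≤ d * log (1 / δ) := hmeas
    _ ≤ d * (P * (2 / r) + p⁻¹ * (P * (2 / r) + P * (4 / r))) := by gcongr
    _ = d * P / r * (2 + 6 * p⁻¹) := by ring
    _ ≤ d * P / r * (8 + 8 * p⁻¹) := by
      have : 0 ≤ p⁻¹ := inv_nonneg.mpr hp.le
      exact mul_le_mul_of_nonneg_left (by linarith) (by positivity)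
    _ = _ := by ring

lemma integral_Ioi_le_of_le_sqrt_div {f : ℝ → ℝ} {a b : ℝ} (ha : 0 ≤ a) (hf₀ : ∀ r, 0 ≤ f r)
    (hfa : ∀ r, a < r → f r = 0) (hfb : ∀ r ∈ Ioc 0 a, f r ≤ √(b / r)) :
    ∫ r in Ioi 0, f r ≤ 2 * √(a * b) := by
  set g : ℝ → ℝ := fun r => √b * r ^ (-(1 / 2) : ℝ)
  have hg : IntegrableOn g (Ioc 0 a) :=
    ((intervalIntegrable_iff_integrableOn_Ioc_of_le ha).mp
      (intervalIntegral.intervalIntegrable_rpow' (by norm_num))).const_mul _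
  have hfg : ∀ r ∈ Ioi 0, f r ≤ (Ioc 0 a).indicator g r := fun r (hr : 0 < r) => by
    rcases le_or_gt r a with hra | hra
    · rw [indicator_of_mem (show r ∈ Ioc 0 a from ⟨hr, hra⟩)]
      refine (hfb r ⟨hr, hra⟩).trans_eq ?_
      rw [Real.sqrt_div' _ hr.le, Real.sqrt_eq_rpow r, div_eq_mul_inv, ← Real.rpow_neg hr.le]
    · rw [indicator_of_notMem fun h => hra.not_ge h.2, hfa r hra]
  calc ∫ r in Ioi 0, f r ≤ ∫ r in Ioi 0, (Ioc 0 a).indicator g r :=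
        integral_mono_of_nonneg (ae_of_all _ fun r => hf₀ r)
          ((integrable_indicator_iff measurableSet_Ioc).mpr hg).integrableOn
          ((ae_restrict_iff' measurableSet_Ioi).mpr (ae_of_all _ hfg))
    _ = √b * ∫ r in (0)..a, r ^ (-(1 / 2) : ℝ) := by
      rw [integral_indicator measurableSet_Ioc, Measure.restrict_restrict measurableSet_Ioc,
        inter_eq_left.mpr Ioc_subset_Ioi_self, integral_const_mul,
        intervalIntegral.integral_of_le ha]
    _ = 2 * √(a * b) := by
      rw [integral_rpow (Or.inl (by norm_num)), Real.sqrt_mul ha, Real.sqrt_eq_rpow a]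
      norm_num
      ring

/-- Entropy-integral estimate for tensor-product kernels on
the torus: if the `1`-periodic even kernel `K₁` satisfies `K₁(0) = 1`,
`|K₁| ≤ 1` and the local lower bound `K₁(t) ≥ 1 − α d_𝕋(t)^p` for
`d_𝕋(t) ≤ R₀`, then for the canonical pseudometric
`ρ(x,y) = √(2 − 2 ∏_j K₁(x_j − y_j))` on `[0,1)^d`,
`∫₀^∞ sup_x √(log(1/μ(B_ρ(x,r)))) dr ≤ C(p) √(d(1+log d)) (1+√α+√(−log 2R₀))`. -/
theorem stmt10 (p : ℝ) (hp : p ∈ Set.Ioc (0 : ℝ) 1) :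
    ∃ C : ℝ, 0 < C ∧
      ∀ (d : ℕ), 1 ≤ d → ∀ α : ℝ, 0 < α → ∀ R₀ : ℝ, R₀ ∈ Set.Ioc (0 : ℝ) (1/2) →
      ∀ K₁ : ℝ → ℝ, Function.Periodic K₁ 1 → (∀ t, K₁ (-t) = K₁ t) →
        K₁ 0 = 1 → (∀ t, |K₁ t| ≤ 1) →
        (∀ t, torusDist t ≤ R₀ → 1 - α * torusDist t ^ p ≤ K₁ t) →
        (∫ r in Set.Ioi (0 : ℝ),
            ⨆ x ∈ Set.univ.pi fun _ : Fin d => Set.Ico (0 : ℝ) 1,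
              Real.sqrt (Real.log (1 /
                (cubeMeasure d
                  {y | Real.sqrt (2 - 2 * ∏ j, K₁ (x j - y j)) ≤ r}).toReal)))
          ≤ C * Real.sqrt (d * (1 + Real.log d)) *
              (1 + Real.sqrt α + Real.sqrt (-Real.log (2 * R₀))) := by
  have hp₀ := hp.1
  refine ⟨8 * √(1 + p⁻¹), by positivity, ?_⟩
  intro d hd α hα R₀ ⟨hR₀, hR₀2⟩ K₁ _ _ _ hK hKlb
  have hL : 0 ≤ -log (2 * R₀) := neg_nonneg.mpr (Real.log_nonpos (by positivity) (by linarith))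
  set X := (1 + p⁻¹) * (d * (1 + log d)) * (1 + α + -log (2 * R₀))
  have hf₀ (r : ℝ) : 0 ≤ ⨆ x ∈ univ.pi fun _ : Fin d => Ico (0 : ℝ) 1,
      √(log (1 / (cubeMeasure d {y | kernelDist K₁ x y ≤ r}).toReal)) :=
    Real.iSup_nonneg fun _ => Real.iSup_nonneg fun _ => Real.sqrt_nonneg _
  calc _ ≤ 2 * √(2 * (8 * X)) := integral_Ioi_le_of_le_sqrt_div zero_le_two hf₀
        (fun r hr => le_antisymm (Real.iSup₂_le (fun x _ => by
          rw [log_one_div_cubeMeasure_eq_zero hK hr.le x, Real.sqrt_zero]) le_rfl) (hf₀ r))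
        (fun r ⟨hr, hr2⟩ => Real.iSup₂_le (fun x hx => Real.sqrt_le_sqrt
          (log_one_div_cubeMeasure_le_div hd hK hp₀ hα.le hR₀ hR₀2 hKlb hr hr2 hx))
          (Real.sqrt_nonneg _))
    _ = 8 * (√(1 + p⁻¹) * √(d * (1 + log d)) * √(1 + α + -log (2 * R₀))) := by
      rw [show 2 * (8 * X) = 4 ^ 2 * X by ring, Real.sqrt_mul (by norm_num),
        Real.sqrt_sq (by norm_num), Real.sqrt_mul (by positivity), Real.sqrt_mul (by positivity)]
      ring
    _ ≤ _ := by
      have := Real.sqrt_add_add_le zero_le_one hα.le hL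
      rw [Real.sqrt_one] at this
      have : 0 ≤ √(1 + p⁻¹) * √(d * (1 + log d)) := by positivity
      nlinarith
end

section
/- There exists a universal constant α > 0 such that for every smoothness parameter r with 1/2 < r ≤ 1, and all β₀, β₁ > 0 satisfying β₀ + β₁·Σ_{k=1}^∞ k^{−2r} = 1, the Korobov kernel K(x) := β₀ + β₁·Σ_{k=1}^∞ k^{−2r} cos(2πkx) satisfies K(x) ≥ 1 − α·x^{2r−1} for all x with 0 ≤ x ≤ 1/(√2·π). -/
/-!
With `s = 2r` and `ζ = ∑ k^{-s}`, the normalization gives `1 - K(x) = β₁ ∑ k^{-s} (1 - cos 2πkx)`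
and `β₁ ζ ≤ 1`, so it suffices to bound the series by `C ζ x^{s-1}` uniformly in `s ∈ (1, 2]`.
Split it at `N = ⌊1/x⌋`. For `k ≤ N`, `1 - cos θ ≤ θ²/2` bounds the head by
`2π² x² N^{3-s} ≤ 2π² x^{s-1}`. For `k > N`, `1 - cos θ ≤ 2`, and grouping the tail into blocks of
`N` consecutive terms, the `q`-th block being at most `N (qN)^{-s}`, gives
`∑_{k>N} k^{-s} ≤ N^{1-s} ζ ≤ 2 ζ x^{s-1}`. Comparing the tail with `ζ` itself, rather than with
`∫_N^∞ t^{-s} dt = N^{1-s}/(s-1)`, is what keeps the constant bounded as `r → 1/2`.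
-/

open Real

theorem tsum_nat_add_le_mul_tsum {f : ℕ → ℝ} {N : ℕ} (hN : 0 < N) (hf0 : ∀ n, 0 ≤ f n)
    (hf : AntitoneOn f (Set.Ici 1)) (hsum : Summable fun q => f (N * (q + 1))) :
    ∑' i, f (N + i) ≤ N * ∑' q, f (N * (q + 1)) := by
  have : NeZero N := ⟨hN.ne'⟩
  let g : ℕ × Fin N → ℝ := fun p => f (N * (p.1 + 1)) * 1
  have hg : Summable g := hsum.mul_of_nonneg (g := fun _ : Fin N => (1 : ℝ))
    Summable.of_finite (fun q => hf0 _) (fun _ => zero_le_one)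
  have hg' : Summable (g ∘ Nat.divModEquiv N) := (Nat.divModEquiv N).summable_iff.mpr hg
  have hblock : ∀ i, f (N + i) ≤ g (Nat.divModEquiv N i) := by
    intro i
    simp only [g, Nat.divModEquiv_apply, mul_one]
    refine hf (Set.mem_Ici.mpr ?_) (Set.mem_Ici.mpr (by omega)) ?_
    · exact Nat.one_le_iff_ne_zero.mpr (by positivity)
    · have := Nat.div_mul_le_self i N
      nlinarith
  calc ∑' i, f (N + i) ≤ ∑' i, g (Nat.divModEquiv N i) :=
        Summable.tsum_le_tsum hblock (Summable.of_nonneg_of_le (fun i => hf0 _) hblock hg') hg'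
    _ = ∑' p, g p := (Nat.divModEquiv N).tsum_eq g
    _ = N * ∑' q, f (N * (q + 1)) := by
        rw [← hsum.tsum_mul_tsum (g := fun _ : Fin N => (1 : ℝ)) Summable.of_finite hg,
          tsum_fintype (fun _ : Fin N => (1 : ℝ))]
        simp [mul_comm]

theorem summable_mul_cos {w : ℕ → ℝ} (hw : Summable w) (θ : ℕ → ℝ) :
    Summable fun k => w k * cos (θ k) :=
  hw.abs.of_norm_bounded fun k => by
    rw [norm_mul, Real.norm_eq_abs]
    exact mul_le_of_le_one_right (abs_nonneg _) (abs_cos_le_one _)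

theorem summable_mul_one_sub_cos {w : ℕ → ℝ} (hw : Summable w) (θ : ℕ → ℝ) :
    Summable fun k => w k * (1 - cos (θ k)) :=
  (hw.sub (summable_mul_cos hw θ)).congr fun k => by ring

theorem tsum_mul_cos_eq_tsum_sub_tsum_mul_one_sub_cos {w : ℕ → ℝ} (hw : Summable w)
    (θ : ℕ → ℝ) :
    ∑' k, w k * cos (θ k) = ∑' k, w k - ∑' k, w k * (1 - cos (θ k)) := by
  rw [eq_sub_iff_add_eq, ← (summable_mul_cos hw θ).tsum_add (summable_mul_one_sub_cos hw θ)]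
  exact tsum_congr fun k => by ring

theorem summable_nat_add_one_rpow_neg {s : ℝ} (hs : 1 < s) :
    Summable fun k : ℕ => ((k : ℝ) + 1) ^ (-s) :=
  ((summable_nat_add_iff 1).mpr (Real.summable_nat_rpow.mpr (neg_lt_neg hs))).congr fun k => by
    push_cast; ring_nf

theorem one_le_tsum_nat_add_one_rpow_neg {s : ℝ} (hs : 1 < s) :
    1 ≤ ∑' k : ℕ, ((k : ℝ) + 1) ^ (-s) := by
  simpa using (summable_nat_add_one_rpow_neg hs).le_tsum 0 fun k _ => by positivity

theorem tsum_nat_add_rpow_neg_le {s : ℝ} (hs : 1 < s) {N : ℕ} (hN : 0 < N) :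
    ∑' i : ℕ, ((N + i : ℕ) : ℝ) ^ (-s) ≤ (N : ℝ) ^ (1 - s) * ∑' k : ℕ, ((k : ℝ) + 1) ^ (-s) := by
  have hNR : (0 : ℝ) < N := by exact_mod_cast hN
  have hsplit : ∀ q : ℕ, ((N * (q + 1) : ℕ) : ℝ) ^ (-s) = (N : ℝ) ^ (-s) * ((q : ℝ) + 1) ^ (-s) :=
    fun q => by push_cast; exact Real.mul_rpow hNR.le (by positivity)
  have hanti : AntitoneOn (fun n : ℕ => (n : ℝ) ^ (-s)) (Set.Ici 1) := fun m hm n hn hmn =>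
    Real.rpow_le_rpow_of_nonpos (by exact_mod_cast hm) (by exact_mod_cast hmn) (by linarith)
  have hsum : Summable fun q : ℕ => ((N * (q + 1) : ℕ) : ℝ) ^ (-s) := by
    simpa only [hsplit] using (summable_nat_add_one_rpow_neg hs).mul_left _
  calc ∑' i : ℕ, ((N + i : ℕ) : ℝ) ^ (-s)
      ≤ N * ∑' q : ℕ, ((N * (q + 1) : ℕ) : ℝ) ^ (-s) :=
        tsum_nat_add_le_mul_tsum hN (fun n => by positivity) hanti hsum
    _ = (N : ℝ) ^ (1 - s) * ∑' k : ℕ, ((k : ℝ) + 1) ^ (-s) := by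
        rw [tsum_congr hsplit, tsum_mul_left, ← mul_assoc, sub_eq_add_neg,
          Real.rpow_add hNR, Real.rpow_one]

theorem rpow_neg_mul_one_sub_cos_le {y : ℝ} (hy : 0 < y) (s x : ℝ) :
    y ^ (-s) * (1 - cos (2 * π * y * x)) ≤ 2 * π ^ 2 * x ^ 2 * y ^ (2 - s) := by
  have hcos : 1 - cos (2 * π * y * x) ≤ (2 * π * y * x) ^ 2 / 2 := by
    linarith [one_sub_sq_div_two_le_cos (x := 2 * π * y * x)]
  have hpow : y ^ (-s) * y ^ 2 = y ^ (2 - s) := by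
    rw [← Real.rpow_natCast, ← Real.rpow_add hy]
    norm_num [neg_add_eq_sub]
  calc y ^ (-s) * (1 - cos (2 * π * y * x)) ≤ y ^ (-s) * ((2 * π * y * x) ^ 2 / 2) := by
        gcongr
    _ = 2 * π ^ 2 * x ^ 2 * (y ^ (-s) * y ^ 2) := by ring
    _ = 2 * π ^ 2 * x ^ 2 * y ^ (2 - s) := by rw [hpow]

theorem sum_range_rpow_neg_mul_one_sub_cos_le {s x : ℝ} (hs : s ≤ 2) (hx : 0 < x) {N : ℕ}
    (hN : (N : ℝ) ≤ x⁻¹) :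
    ∑ k ∈ Finset.range N, ((k : ℝ) + 1) ^ (-s) * (1 - cos (2 * π * ((k : ℝ) + 1) * x))
      ≤ 2 * π ^ 2 * x ^ (s - 1) := by
  have hterm : ∀ k ∈ Finset.range N,
      ((k : ℝ) + 1) ^ (-s) * (1 - cos (2 * π * ((k : ℝ) + 1) * x))
        ≤ 2 * π ^ 2 * x ^ 2 * (N : ℝ) ^ (2 - s) := fun k hk => by
    have hkN : (k : ℝ) + 1 ≤ N := by exact_mod_cast Finset.mem_range.mp hk
    calc _ ≤ 2 * π ^ 2 * x ^ 2 * ((k : ℝ) + 1) ^ (2 - s) :=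
          rpow_neg_mul_one_sub_cos_le (by positivity) s x
      _ ≤ 2 * π ^ 2 * x ^ 2 * (N : ℝ) ^ (2 - s) := by gcongr
  have hxpow : x ^ 2 * (x⁻¹ * x⁻¹ ^ (2 - s)) = x ^ (s - 1) := by
    rw [Real.inv_rpow hx.le, ← Real.rpow_neg hx.le, show s - 1 = -(2 - s) + 1 by ring,
      Real.rpow_add_one hx.ne']
    field_simp
  calc _ ≤ ∑ _k ∈ Finset.range N, 2 * π ^ 2 * x ^ 2 * (N : ℝ) ^ (2 - s) :=
        Finset.sum_le_sum hterm
    _ = 2 * π ^ 2 * (x ^ 2 * ((N : ℝ) * (N : ℝ) ^ (2 - s))) := by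
        rw [Finset.sum_const, Finset.card_range, nsmul_eq_mul]; ring
    _ ≤ 2 * π ^ 2 * x ^ (s - 1) := by
        rw [← hxpow]; gcongr

theorem rpow_one_sub_le_two_mul_rpow {s x y : ℝ} (hs1 : 1 ≤ s) (hs2 : s ≤ 2) (hy : 0 < y)
    (hyx : y⁻¹ ≤ 2 * x) :
    y ^ (1 - s) ≤ 2 * x ^ (s - 1) := by
  have hx : 0 ≤ x := by nlinarith [inv_pos.mpr hy]
  calc y ^ (1 - s) = y⁻¹ ^ (s - 1) := by
        rw [Real.inv_rpow hy.le, ← Real.rpow_neg hy.le, neg_sub]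
    _ ≤ (2 * x) ^ (s - 1) := by gcongr
    _ = 2 ^ (s - 1) * x ^ (s - 1) := Real.mul_rpow zero_le_two hx
    _ ≤ 2 ^ (1 : ℝ) * x ^ (s - 1) := by
        gcongr
        · norm_num
        · linarith
    _ = 2 * x ^ (s - 1) := by rw [Real.rpow_one]

theorem tsum_nat_add_rpow_neg_mul_one_sub_cos_le {s x : ℝ} (hs1 : 1 < s) (hs2 : s ≤ 2) {N : ℕ}
    (hN : 0 < N) (hNx : (N : ℝ)⁻¹ ≤ 2 * x) :
    ∑' i : ℕ, (((i + N : ℕ) : ℝ) + 1) ^ (-s) * (1 - cos (2 * π * (((i + N : ℕ) : ℝ) + 1) * x))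
      ≤ 4 * ((∑' k : ℕ, ((k : ℝ) + 1) ^ (-s)) * x ^ (s - 1)) := by
  have hterm : ∀ i : ℕ,
      (((i + N : ℕ) : ℝ) + 1) ^ (-s) * (1 - cos (2 * π * (((i + N : ℕ) : ℝ) + 1) * x))
        ≤ 2 * ((N + i : ℕ) : ℝ) ^ (-s) := fun i => by
    have hpow : (((i + N : ℕ) : ℝ) + 1) ^ (-s) ≤ ((N + i : ℕ) : ℝ) ^ (-s) :=
      Real.rpow_le_rpow_of_nonpos (by positivity) (by push_cast; linarith) (by linarith)
    calc _ ≤ ((N + i : ℕ) : ℝ) ^ (-s) * 2 :=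
          mul_le_mul hpow (by linarith [neg_one_le_cos (2 * π * (((i + N : ℕ) : ℝ) + 1) * x)])
            (sub_nonneg.mpr (cos_le_one _)) (by positivity)
      _ = 2 * ((N + i : ℕ) : ℝ) ^ (-s) := mul_comm _ _
  have hsum : Summable fun i : ℕ => ((N + i : ℕ) : ℝ) ^ (-s) := by
    simpa [add_comm] using
      (summable_nat_add_iff N).mpr (Real.summable_nat_rpow.mpr (neg_lt_neg hs1))
  have hζ : 0 ≤ ∑' k : ℕ, ((k : ℝ) + 1) ^ (-s) := by
    linarith [one_le_tsum_nat_add_one_rpow_neg hs1]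
  calc _ ≤ ∑' i : ℕ, 2 * ((N + i : ℕ) : ℝ) ^ (-s) :=
        Summable.tsum_le_tsum hterm
          (Summable.of_nonneg_of_le (fun i => mul_nonneg (by positivity)
            (sub_nonneg.mpr (cos_le_one _))) hterm (hsum.mul_left 2)) (hsum.mul_left 2)
    _ ≤ 2 * ((N : ℝ) ^ (1 - s) * ∑' k : ℕ, ((k : ℝ) + 1) ^ (-s)) := by
        rw [tsum_mul_left]; gcongr; exact tsum_nat_add_rpow_neg_le hs1 hN
    _ ≤ 2 * ((2 * x ^ (s - 1)) * ∑' k : ℕ, ((k : ℝ) + 1) ^ (-s)) := by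
        gcongr; exact rpow_one_sub_le_two_mul_rpow hs1.le hs2 (by exact_mod_cast hN) hNx
    _ = 4 * ((∑' k : ℕ, ((k : ℝ) + 1) ^ (-s)) * x ^ (s - 1)) := by ring

theorem tsum_rpow_neg_mul_one_sub_cos_le {s x : ℝ} (hs1 : 1 < s) (hs2 : s ≤ 2) (hx0 : 0 ≤ x)
    (hx1 : x ≤ 1) :
    ∑' k : ℕ, ((k : ℝ) + 1) ^ (-s) * (1 - cos (2 * π * ((k : ℝ) + 1) * x))
      ≤ (2 * π ^ 2 + 4) * ((∑' k : ℕ, ((k : ℝ) + 1) ^ (-s)) * x ^ (s - 1)) := by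
  rcases hx0.eq_or_lt with rfl | hx
  · simp [Real.zero_rpow (by linarith : s - 1 ≠ 0)]
  set N := ⌊x⁻¹⌋₊
  have hN : 0 < N := Nat.floor_pos.mpr ((one_le_inv₀ hx).mpr hx1)
  have hNx : (N : ℝ) ≤ x⁻¹ := Nat.floor_le (by positivity)
  have hNx' : (N : ℝ)⁻¹ ≤ 2 * x := by
    have hlt : x⁻¹ < N + 1 := Nat.lt_floor_add_one _
    have h1 : (1 : ℝ) ≤ N := by exact_mod_cast hN
    rw [inv_le_iff_one_le_mul₀ (by positivity)]
    rw [inv_lt_iff_one_lt_mul₀ hx] at hlt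
    nlinarith
  have hhead := sum_range_rpow_neg_mul_one_sub_cos_le hs2 hx hNx
  have htail := tsum_nat_add_rpow_neg_mul_one_sub_cos_le hs1 hs2 hN hNx'
  have hζ := one_le_tsum_nat_add_one_rpow_neg hs1
  rw [← (summable_mul_one_sub_cos (summable_nat_add_one_rpow_neg hs1)
    fun k => 2 * π * ((k : ℝ) + 1) * x).sum_add_tsum_nat_add N]
  linarith [mul_le_mul_of_nonneg_left hζ (by positivity : 0 ≤ 2 * π ^ 2 * x ^ (s - 1))]

/-- Local polynomial lower bound for the Korobov kernel of
low smoothness: there is a universal constant `α > 0` such that for all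
`1/2 < r ≤ 1` and `β₀, β₁ > 0` with `β₀ + β₁ ζ(2r) = 1`, the kernel
`K(x) = β₀ + β₁ Σ_{k≥1} k^{−2r} cos(2πkx)` satisfies
`K(x) ≥ 1 − α x^{2r−1}` for `0 ≤ x ≤ 1/(√2 π)`. -/
theorem stmt14 :
    ∃ α : ℝ, 0 < α ∧
      ∀ r : ℝ, 1/2 < r → r ≤ 1 →
      ∀ β₀ β₁ : ℝ, 0 < β₀ → 0 < β₁ →
        β₀ + β₁ * (∑' k : ℕ, ((k : ℝ) + 1) ^ (-(2 * r))) = 1 →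
        ∀ x : ℝ, 0 ≤ x → x ≤ 1 / (Real.sqrt 2 * Real.pi) →
          1 - α * x ^ (2 * r - 1)
            ≤ β₀ + β₁ * ∑' k : ℕ, ((k : ℝ) + 1) ^ (-(2 * r)) *
                Real.cos (2 * Real.pi * ((k : ℝ) + 1) * x) := by
  refine ⟨2 * π ^ 2 + 4, by positivity, fun r hr hr1 β₀ β₁ hβ₀ hβ₁ hnorm x hx0 hx1 => ?_⟩
  have hx1' : x ≤ 1 := hx1.trans <| (div_le_one (by positivity)).mpr <|
    one_le_mul_of_one_le_of_one_le (one_le_sqrt.mpr one_le_two) (by linarith [pi_gt_three])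
  have hdefect := tsum_rpow_neg_mul_one_sub_cos_le (s := 2 * r) (by linarith) (by linarith)
    hx0 hx1'
  rw [tsum_mul_cos_eq_tsum_sub_tsum_mul_one_sub_cos (summable_nat_add_one_rpow_neg (by linarith))]
  have hβζ : β₁ * ∑' k : ℕ, ((k : ℝ) + 1) ^ (-(2 * r)) ≤ 1 := by linarith
  linarith [mul_le_mul_of_nonneg_left hdefect hβ₁.le,
    mul_le_mul_of_nonneg_left hβζ (by positivity : 0 ≤ (2 * π ^ 2 + 4) * x ^ (2 * r - 1))]
end

section
/- There exists a universal constant c₁ > 0 such that for every r with 1/2 < r ≤ 1 and every x with 0 < x ≤ 1/(√2·π): Σ_{k=1}^{⌊1/(4x)⌋} k^{−2r} cos(2πkx) ≥ ( Σ_{k=1}^∞ k^{−2r} ) · ( 1 − c₁·x^{2r−1} ). -/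
open scoped ENNReal NNReal

lemma aux_mvt {q a : ℝ} (hq : 0 < q) (ha : 1 ≤ a) :
    q * (a + 1) ^ (-(q + 1)) ≤ a ^ (-q) - (a + 1) ^ (-q) ∧
    a ^ (-q) - (a + 1) ^ (-q) ≤ q * a ^ (-(q + 1)) := by
  have ha0 : (0:ℝ) < a := lt_of_lt_of_le one_pos ha
  obtain ⟨c, hc, hc'⟩ := exists_hasDerivAt_eq_slope (fun t : ℝ => t ^ (-q))
      (fun t : ℝ => (-q) * t ^ (-q - 1)) (by linarith : a < a + 1)
      (fun t ht => (Real.continuousAt_rpow_const t (-q)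
        (Or.inl (by simp only [Set.mem_Icc] at ht; nlinarith [ht.1] : t ≠ 0))).continuousWithinAt)
      (fun t ht => Real.hasDerivAt_rpow_const
        (Or.inl (by simp only [Set.mem_Ioo] at ht; nlinarith [ht.1] : t ≠ 0)))
  simp only [Set.mem_Ioo] at hc
  have hc0 : 0 < c := by linarith
  have heq : a ^ (-q) - (a + 1) ^ (-q) = q * c ^ (-q - 1) := by
    have : a + 1 - a = 1 := by ring
    rw [this, div_one] at hc'
    nlinarith [hc']
  have h1 : c ^ (-q - 1) ≤ a ^ (-q - 1) :=
    Real.rpow_le_rpow_of_nonpos ha0 hc.1.le (by linarith)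
  have h2 : (a + 1) ^ (-q - 1) ≤ c ^ (-q - 1) :=
    Real.rpow_le_rpow_of_nonpos hc0 hc.2.le (by linarith)
  have hrw : -(q + 1) = -q - 1 := by ring
  rw [hrw]
  constructor
  · rw [heq]; nlinarith
  · rw [heq]; nlinarith

lemma aux_tele {q c : ℝ} (hq : 0 < q) (hc : 1 ≤ c) :
    HasSum (fun j : ℕ => (c + j) ^ (-q) - (c + j + 1) ^ (-q)) (c ^ (-q)) := by
  have hpos : ∀ j : ℕ, (0:ℝ) < c + j := fun j => by positivity
  have hnn : ∀ j : ℕ, 0 ≤ (c + j) ^ (-q) - (c + j + 1) ^ (-q) := fun j => by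
    have := Real.rpow_le_rpow_of_nonpos (hpos j) (by linarith : c + j ≤ c + j + 1)
      (by linarith : -q ≤ 0)
    linarith
  rw [hasSum_iff_tendsto_nat_of_nonneg hnn]
  have hsum : ∀ n : ℕ, ∑ j ∈ Finset.range n, ((c + j) ^ (-q) - (c + j + 1) ^ (-q))
      = c ^ (-q) - (c + n) ^ (-q) := by
    intro n
    have h := Finset.sum_range_sub' (fun j : ℕ => (c + j) ^ (-q)) n
    calc ∑ j ∈ Finset.range n, ((c + j) ^ (-q) - (c + j + 1) ^ (-q))
        = ∑ j ∈ Finset.range n, ((c + j) ^ (-q) - (c + ((j + 1 : ℕ) : ℝ)) ^ (-q)) := by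
          refine Finset.sum_congr rfl fun j _ => by push_cast; ring_nf
      _ = (c + ((0 : ℕ) : ℝ)) ^ (-q) - (c + n) ^ (-q) := h
      _ = c ^ (-q) - (c + n) ^ (-q) := by norm_num
  simp only [hsum]
  have ht : Filter.Tendsto (fun n : ℕ => (c + n) ^ (-q)) Filter.atTop (nhds 0) := by
    apply (tendsto_rpow_neg_atTop hq).comp
    exact Filter.tendsto_atTop_add_const_left _ c tendsto_natCast_atTop_atTop
  simpa using tendsto_const_nhds.sub ht

set_option maxHeartbeats 1000000 in
/-- Head of the Korobov cosine series: there is a universal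
constant `c₁ > 0` such that for all `1/2 < r ≤ 1` and `0 < x ≤ 1/(√2 π)`,
`Σ_{1 ≤ k ≤ 1/(4x)} k^{−2r} cos(2πkx) ≥ ζ(2r) (1 − c₁ x^{2r−1})`. -/
theorem stmt15 :
    ∃ c₁ : ℝ, 0 < c₁ ∧
      ∀ r : ℝ, 1/2 < r → r ≤ 1 →
      ∀ x : ℝ, 0 < x → x ≤ 1 / (Real.sqrt 2 * Real.pi) →
        (∑' k : ℕ, ((k : ℝ) + 1) ^ (-(2 * r))) * (1 - c₁ * x ^ (2 * r - 1))
          ≤ ∑ k ∈ Finset.Icc 1 ⌊1 / (4 * x)⌋₊,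
              (k : ℝ) ^ (-(2 * r)) * Real.cos (2 * Real.pi * (k : ℝ) * x) := by
  -- basic numeric facts
  have hs2 : (1.4 : ℝ) ≤ Real.sqrt 2 := by
    rw [show (1.4:ℝ) = Real.sqrt (1.4 ^ 2) from (Real.sqrt_sq (by norm_num)).symm]
    exact Real.sqrt_le_sqrt (by norm_num)
  have hsp : (4:ℝ) < Real.sqrt 2 * Real.pi := by
    calc (4:ℝ) < 1.4 * 3.14 := by norm_num
    _ ≤ Real.sqrt 2 * Real.pi :=
        mul_le_mul hs2 (by linarith [Real.pi_gt_d6]) (by norm_num)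
          (by linarith [Real.sqrt_nonneg 2])
  set m : ℝ := 1/4 - 1/(Real.sqrt 2 * Real.pi) with hmdef
  have hinv : 1/(Real.sqrt 2 * Real.pi) < 1/4 := by
    apply one_div_lt_one_div_of_lt <;> linarith
  have hinvpos : 0 < 1/(Real.sqrt 2 * Real.pi) := by positivity
  have hm : 0 < m := by simp only [hmdef]; linarith
  have hm1 : m ≤ 1 := by simp only [hmdef]; linarith
  refine ⟨1/m + Real.pi ^ 2 / 2, by positivity, ?_⟩
  intro r hr1 hr2 x hx hxu
  set q : ℝ := 2 * r - 1 with hqdef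
  have hq0 : 0 < q := by simp only [hqdef]; linarith
  have hq1 : q ≤ 1 := by simp only [hqdef]; linarith
  have hq2 : -(2 * r) = -(q + 1) := by simp only [hqdef]; ring
  set N : ℕ := ⌊1 / (4 * x)⌋₊ with hNdef
  have hx4 : (0:ℝ) < 4 * x := by linarith
  have hfl : (N:ℝ) ≤ 1 / (4 * x) := Nat.floor_le (by positivity)
  have hx14 : x < 1/4 := lt_of_le_of_lt hxu hinv
  have hN1 : 1 ≤ N := by
    apply Nat.le_floor
    rw [Nat.cast_one, le_div_iff₀ hx4]
    linarith
  have hNR : (1:ℝ) ≤ (N:ℝ) := by exact_mod_cast hN1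
  have hN0 : (0:ℝ) < (N:ℝ) := by linarith
  have hNx : m ≤ (N:ℝ) * x := by
    have h1 : 1 / (4 * x) < (N:ℝ) + 1 := Nat.lt_floor_add_one _
    have h2 : (1 / (4 * x) - 1) * x < (N:ℝ) * x :=
      mul_lt_mul_of_pos_right (by linarith) hx
    have e : (1 / (4 * x)) * x = 1/4 := by field_simp
    have h3 : (1 / (4 * x) - 1) * x = 1/4 - x := by rw [sub_mul, e, one_mul]
    rw [h3] at h2
    simp only [hmdef]
    linarith
  -- summability of the zeta series
  set f : ℕ → ℝ := fun k => ((k : ℝ) + 1) ^ (-(2 * r)) with hfdef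
  have hsum : Summable f := by
    have h0 : Summable (fun k : ℕ => ((k : ℝ)) ^ (-(2 * r))) :=
      Real.summable_nat_rpow.2 (by linarith)
    have h1 : Summable (fun k : ℕ => (((k + 1 : ℕ) : ℝ)) ^ (-(2 * r))) :=
      (summable_nat_add_iff 1).2 h0
    refine h1.congr fun k => ?_
    simp only [hfdef]
    congr 1
    push_cast; ring
  set S : ℝ := ∑' k : ℕ, f k with hSdef
  have hSnn : 0 ≤ S := tsum_nonneg fun k => by
    have : (0:ℝ) ≤ ((k:ℝ) + 1) ^ (-(2*r)) := Real.rpow_nonneg (by positivity) _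
    simpa [hfdef] using this
  have hS1 : 1 ≤ S := by
    have h0 : f 0 = 1 := by simp [hfdef]
    have := Summable.le_tsum hsum 0 (fun j _ => by
      have : (0:ℝ) ≤ ((j:ℝ) + 1) ^ (-(2*r)) := Real.rpow_nonneg (by positivity) _
      simpa [hfdef] using this)
    rw [h0] at this; exact this
  -- S ≥ 1/q via telescoping + MVT
  have hSq : 1/q ≤ S := by
    have tele1 : HasSum (fun j : ℕ => ((1:ℝ) + j) ^ (-q) - ((1:ℝ) + j + 1) ^ (-q))
        ((1:ℝ) ^ (-q)) := aux_tele hq0 le_rfl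
    rw [Real.one_rpow] at tele1
    have teled := tele1.div_const q
    have hterm : ∀ k : ℕ, (((1:ℝ) + k) ^ (-q) - ((1:ℝ) + k + 1) ^ (-q)) / q ≤ f k := by
      intro k
      have hk : (1:ℝ) ≤ 1 + (k:ℝ) := by
        have : (0:ℝ) ≤ (k:ℝ) := Nat.cast_nonneg k
        linarith
      have hmvt := (aux_mvt hq0 hk).2
      rw [div_le_iff₀ hq0]
      have hfk : f k = ((1:ℝ) + k) ^ (-(q + 1)) := by
        simp only [hfdef, hq2]
        congr 1
        ring
      rw [hfk]
      linarith
    have hle := Summable.tsum_le_tsum hterm teled.summable hsum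
    rw [teled.tsum_eq] at hle
    exact hle
  -- split S into head and tail
  have key : ∑ k ∈ Finset.range N, f k + ∑' j : ℕ, f (j + N) = S :=
    Summable.sum_add_tsum_nat_add N hsum
  set T : ℝ := ∑' j : ℕ, f (j + N) with hTdef
  -- tail bound
  have hT : T ≤ (N:ℝ) ^ (-q) / q := by
    have teleN : HasSum (fun j : ℕ => ((N:ℝ) + j) ^ (-q) - ((N:ℝ) + j + 1) ^ (-q))
        ((N:ℝ) ^ (-q)) := aux_tele hq0 hNR
    have teled := teleN.div_const q
    have hterm : ∀ j : ℕ, f (j + N) ≤ (((N:ℝ) + j) ^ (-q) - ((N:ℝ) + j + 1) ^ (-q)) / q := by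
      intro j
      have hj : (1:ℝ) ≤ (N:ℝ) + j := by
        have : (0:ℝ) ≤ (j:ℝ) := Nat.cast_nonneg j
        linarith
      have hmvt := (aux_mvt hq0 hj).1
      rw [le_div_iff₀ hq0]
      have hfj : f (j + N) = ((N:ℝ) + j + 1) ^ (-(q + 1)) := by
        simp only [hfdef, hq2]
        congr 1
        push_cast; ring
      rw [hfj]
      linarith
    have hle := Summable.tsum_le_tsum hterm ((summable_nat_add_iff N).2 hsum) teled.summable
    rw [teled.tsum_eq] at hle
    exact hle
  have hTb : T ≤ S * (1/m * x ^ q) := by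
    have e1 : ((N:ℝ) * x) ^ (-q) * x ^ q = (N:ℝ) ^ (-q) := by
      rw [Real.mul_rpow hN0.le hx.le, mul_assoc, ← Real.rpow_add hx]
      simp
    have e2 : ((N:ℝ) * x) ^ (-q) ≤ m ^ (-q) :=
      Real.rpow_le_rpow_of_nonpos hm hNx (by linarith)
    have e3 : m ^ (-q) ≤ m ^ (-1 : ℝ) :=
      Real.rpow_le_rpow_of_exponent_ge hm hm1 (by linarith)
    have e4 : m ^ (-1 : ℝ) = 1/m := by rw [Real.rpow_neg_one]; ring
    have e5 : (N:ℝ) ^ (-q) ≤ 1/m * x ^ q := by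
      rw [← e1]
      have hxq : (0:ℝ) ≤ x ^ q := Real.rpow_nonneg hx.le q
      nlinarith
    calc T ≤ (N:ℝ) ^ (-q) / q := hT
      _ = (1/q) * (N:ℝ) ^ (-q) := by ring
      _ ≤ S * (1/m * x ^ q) := by
          have hNq : (0:ℝ) ≤ (N:ℝ) ^ (-q) := Real.rpow_nonneg hN0.le _
          have h1q : (0:ℝ) ≤ 1/q := by positivity
          nlinarith
  -- head sum identity
  have hhead : ∑ k ∈ Finset.Icc 1 N, (k:ℝ) ^ (-(2 * r)) = S - T := by
    have e : ∑ k ∈ Finset.Icc 1 N, (k:ℝ) ^ (-(2 * r)) = ∑ k ∈ Finset.range N, f k := by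
      rw [← Finset.Ico_add_one_right_eq_Icc, Finset.sum_Ico_eq_sum_range]
      refine Finset.sum_congr rfl fun i _ => ?_
      simp only [hfdef]
      congr 1
      push_cast; ring
    rw [e]; linarith
  -- bound on the quadratic correction sum
  have hquad : ∑ k ∈ Finset.Icc 1 N, (k:ℝ) ^ (2 - 2 * r) ≤ (1/(4*x)) ^ (3 - 2*r) := by
    have step1 : ∑ k ∈ Finset.Icc 1 N, (k:ℝ) ^ (2 - 2 * r)
        ≤ ∑ _k ∈ Finset.Icc 1 N, (N:ℝ) ^ (2 - 2 * r) := by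
      refine Finset.sum_le_sum fun k hk => ?_
      have hk' := (Finset.mem_Icc.1 hk).2
      exact Real.rpow_le_rpow (Nat.cast_nonneg k) (by exact_mod_cast hk') (by linarith)
    have step2 : ∑ _k ∈ Finset.Icc 1 N, (N:ℝ) ^ (2 - 2 * r) = (N:ℝ) * (N:ℝ) ^ (2 - 2*r) := by
      rw [Finset.sum_const, Nat.card_Icc, Nat.add_sub_cancel, nsmul_eq_mul]
    have step3 : (N:ℝ) * (N:ℝ) ^ (2 - 2*r) = (N:ℝ) ^ (3 - 2*r) := by
      rw [show (N:ℝ) * (N:ℝ) ^ (2 - 2*r) = (N:ℝ) ^ (1:ℝ) * (N:ℝ) ^ (2 - 2*r) by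
        rw [Real.rpow_one], ← Real.rpow_add hN0]
      congr 1
      ring
    have step4 : (N:ℝ) ^ (3 - 2*r) ≤ (1/(4*x)) ^ (3 - 2*r) :=
      Real.rpow_le_rpow hN0.le hfl (by linarith)
    linarith
  have hB : 2 * Real.pi ^ 2 * x ^ 2 * (1/(4*x)) ^ (3 - 2*r)
      ≤ S * (Real.pi ^ 2 / 2 * x ^ q) := by
    have e1 : (1/(4*x)) ^ (3 - 2*r) = (4*x) ^ (2*r - 3) := by
      rw [show (2*r - 3 : ℝ) = -(3 - 2*r) by ring, Real.rpow_neg hx4.le, one_div,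
        Real.inv_rpow hx4.le]
    have e2 : ((4:ℝ)*x) ^ (2*r - 3) = (4:ℝ) ^ (2*r - 3) * x ^ (2*r - 3) :=
      Real.mul_rpow (by norm_num) hx.le
    have e3 : x ^ 2 * x ^ (2*r - 3) = x ^ q := by
      rw [show x ^ 2 = x ^ ((2:ℕ):ℝ) from (Real.rpow_natCast x 2).symm,
        ← Real.rpow_add hx]
      congr 1
      simp only [hqdef]
      push_cast; ring
    have e4 : (4:ℝ) ^ (2*r - 3) ≤ (4:ℝ) ^ (-1:ℝ) :=
      Real.rpow_le_rpow_of_exponent_le (by norm_num) (by linarith)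
    have e5 : (4:ℝ) ^ (-1:ℝ) = 1/4 := by rw [Real.rpow_neg_one]; norm_num
    have hxq : (0:ℝ) ≤ x ^ q := Real.rpow_nonneg hx.le q
    calc 2 * Real.pi ^ 2 * x ^ 2 * (1/(4*x)) ^ (3 - 2*r)
        = 2 * Real.pi ^ 2 * ((4:ℝ) ^ (2*r - 3)) * (x ^ 2 * x ^ (2*r - 3)) := by
          rw [e1, e2]; ring
      _ = 2 * Real.pi ^ 2 * ((4:ℝ) ^ (2*r - 3)) * x ^ q := by rw [e3]
      _ ≤ 2 * Real.pi ^ 2 * (1/4) * x ^ q := by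
          have hA : (4:ℝ) ^ (2*r - 3) ≤ 1/4 := e5 ▸ e4
          have hpp : (0:ℝ) ≤ 2 * Real.pi ^ 2 := by positivity
          exact mul_le_mul_of_nonneg_right (mul_le_mul_of_nonneg_left hA hpp) hxq
      _ = Real.pi ^ 2 / 2 * x ^ q * 1 := by ring
      _ ≤ Real.pi ^ 2 / 2 * x ^ q * S := by
          have : (0:ℝ) ≤ Real.pi ^ 2 / 2 * x ^ q := by positivity
          nlinarith
      _ = S * (Real.pi ^ 2 / 2 * x ^ q) := by ring
  -- pointwise cosine bound
  have hcos : ∀ k ∈ Finset.Icc 1 N,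
      (k:ℝ) ^ (-(2*r)) - 2*Real.pi^2*x^2 * (k:ℝ) ^ (2 - 2*r)
        ≤ (k:ℝ) ^ (-(2*r)) * Real.cos (2*Real.pi*(k:ℝ)*x) := by
    intro k hk
    have hk1 : 1 ≤ k := (Finset.mem_Icc.1 hk).1
    have hk0 : (0:ℝ) < (k:ℝ) := by exact_mod_cast Nat.pos_of_ne_zero (by omega)
    have hc := Real.one_sub_sq_div_two_le_cos (x := 2*Real.pi*(k:ℝ)*x)
    have hknn : (0:ℝ) ≤ (k:ℝ) ^ (-(2*r)) := Real.rpow_nonneg hk0.le _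
    have hmul := mul_le_mul_of_nonneg_left hc hknn
    have ekey : (k:ℝ) ^ (-(2*r)) * (k:ℝ) ^ (2:ℕ) = (k:ℝ) ^ (2 - 2*r) := by
      rw [show (k:ℝ) ^ (2:ℕ) = (k:ℝ) ^ ((2:ℕ):ℝ) from (Real.rpow_natCast (k:ℝ) 2).symm,
        ← Real.rpow_add hk0]
      congr 1
      push_cast; ring
    calc (k:ℝ) ^ (-(2*r)) - 2*Real.pi^2*x^2 * (k:ℝ) ^ (2 - 2*r)
        = (k:ℝ) ^ (-(2*r)) * (1 - (2*Real.pi*(k:ℝ)*x) ^ 2 / 2) := by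
          rw [← ekey]; ring
      _ ≤ _ := hmul
  have hsum2 : ∑ k ∈ Finset.Icc 1 N, ((k:ℝ) ^ (-(2*r)) - 2*Real.pi^2*x^2 * (k:ℝ) ^ (2 - 2*r))
      ≤ ∑ k ∈ Finset.Icc 1 N, (k:ℝ) ^ (-(2*r)) * Real.cos (2*Real.pi*(k:ℝ)*x) :=
    Finset.sum_le_sum hcos
  have hsplit : ∑ k ∈ Finset.Icc 1 N,
      ((k:ℝ) ^ (-(2*r)) - 2*Real.pi^2*x^2 * (k:ℝ) ^ (2 - 2*r))
      = (S - T) - 2*Real.pi^2*x^2 * ∑ k ∈ Finset.Icc 1 N, (k:ℝ) ^ (2 - 2*r) := by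
    rw [Finset.sum_sub_distrib, ← Finset.mul_sum, hhead]
  rw [hsplit] at hsum2
  have hQ : 2*Real.pi^2*x^2 * ∑ k ∈ Finset.Icc 1 N, (k:ℝ) ^ (2 - 2*r)
      ≤ S * (Real.pi^2/2 * x ^ q) := by
    refine le_trans ?_ hB
    have hpp : (0:ℝ) ≤ 2*Real.pi^2*x^2 := by positivity
    exact mul_le_mul_of_nonneg_left hquad hpp
  have expand : S * (1 - (1/m + Real.pi ^ 2 / 2) * x ^ q)
      = S - S * (1/m * x ^ q) - S * (Real.pi ^ 2 / 2 * x ^ q) := by ring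
  rw [expand]
  linarith
end

section
/- For every r with 1/2 < r ≤ 1 and every x with 0 < x ≤ 1/(√2·π), the tail of the cosine series is approximated by the corresponding integral: | Σ_{k > 1/(4x), k∈ℕ} k^{−2r} cos(2πkx) − ∫_{1/(4x)}^∞ z^{−2r} cos(2πxz) dz | ≤ (π + 4r) · ( Σ_{k=1}^∞ k^{−2r} ) · x. -/
/-!
Cut `(a, ∞)`, `a = 1 / (4x) ≥ 1`, into the unit intervals `(a + j, a + j + 1]`; the `j`-th one
contains exactly one integer, `⌊a⌋₊ + 1 + j`. On it the mean value inequality bounds the difference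
between the value of `f z = z ^ p * cos (c * z)` at that integer and the integral of `f` by half of
`sup |f'| ≤ (|p| / a + |c|) (j + 1) ^ p`. For `p = -2r`, `c = 2πx` this is
`(π + 4r) x (j + 1) ^ (-2r)`, and these errors sum to `(π + 4r) ζ(2r) x`.
-/

open MeasureTheory Set Real

theorem tsum_ite_lt_natCast_eq_tsum_add_floor {α M : Type*} [Semiring α] [LinearOrder α]
    [FloorSemiring α] [AddCommMonoid M] [TopologicalSpace M] {a : α} (ha : 0 ≤ a) (g : ℕ → M) :
    ∑' k : ℕ, (if a < k then g k else 0) = ∑' j : ℕ, g (j + (⌊a⌋₊ + 1)) := by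
  rw [← (add_left_injective (⌊a⌋₊ + 1)).tsum_eq (f := fun k : ℕ => if a < k then g k else 0)]
  · exact tsum_congr fun j => if_pos <| (Nat.floor_lt ha).1 (by omega)
  · intro k hk
    have : ⌊a⌋₊ < k := (Nat.floor_lt ha).2 (by_contra fun h => hk (if_neg h))
    exact ⟨k - (⌊a⌋₊ + 1), by simp only; omega⟩

theorem iUnion_Ioc_add_natCast (a : ℝ) : ⋃ j : ℕ, Ioc (a + j) (a + j + 1) = Ioi a := by
  ext z
  simp only [mem_iUnion, mem_Ioc, mem_Ioi]
  constructor
  · rintro ⟨j, hj, -⟩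
    linarith [j.cast_nonneg (α := ℝ)]
  · intro hz
    obtain ⟨j, hj⟩ := Nat.exists_eq_add_one_of_ne_zero (Nat.ceil_pos.2 (sub_pos.2 hz)).ne'
    obtain ⟨h₁, h₂⟩ := (Nat.ceil_eq_iff (by omega)).1 hj
    simp only [add_tsub_cancel_right, Nat.cast_add, Nat.cast_one] at h₁ h₂
    exact ⟨j, by linarith, by linarith⟩

theorem hasSum_integral_Ioc_add_natCast {E : Type*} [NormedAddCommGroup E] [NormedSpace ℝ E]
    {f : ℝ → E} {a : ℝ} (hf : IntegrableOn f (Ioi a)) :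
    HasSum (fun j : ℕ => ∫ z in Ioc (a + j) (a + j + 1), f z) (∫ z in Ioi a, f z) := by
  have hdisj : Pairwise (Function.onFun Disjoint fun j : ℕ => Ioc (a + j) (a + j + 1)) :=
    fun i j hij => by simpa using pairwise_disjoint_Ioc_add_intCast a (Nat.cast_injective.ne hij)
  rw [← iUnion_Ioc_add_natCast a] at hf ⊢
  exact hasSum_integral_iUnion (fun _ => measurableSet_Ioc) hdisj hf

theorem norm_tsum_sub_le_of_hasSum {E : Type*} [NormedAddCommGroup E] [CompleteSpace E]
    {u v : ℕ → E} {S : E} {B : ℕ → ℝ} (hv : HasSum v S) (hB : Summable B)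
    (h : ∀ j, ‖u j - v j‖ ≤ B j) : ‖∑' j, u j - S‖ ≤ ∑' j, B j := by
  have hd : HasSum (fun j => u j - v j) (∑' j, u j - S) := by
    have hu := (Summable.of_norm_bounded hB h).hasSum.add hv
    simp only [sub_add_cancel] at hu
    simpa [hu.tsum_eq] using hu.sub hv
  rw [← hd.tsum_eq]
  exact tsum_of_norm_bounded hB.hasSum h

theorem integral_Ioc_abs_sub_le_half {b k : ℝ} (hk : k ∈ Icc b (b + 1)) :
    ∫ z in Ioc b (b + 1), |z - k| ≤ 1 / 2 := by
  have hint : ∀ u v : ℝ, IntervalIntegrable (fun z => |z - k|) volume u v :=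
    fun u v => (continuous_abs.comp (continuous_sub_right k)).intervalIntegrable u v
  have hleft : ∫ z in b..k, |z - k| = ∫ z in b..k, (k - z) :=
    intervalIntegral.integral_congr fun z hz => by
      rw [uIcc_of_le hk.1] at hz
      simp only [abs_of_nonpos (sub_nonpos.2 hz.2), neg_sub]
  have hright : ∫ z in k..b + 1, |z - k| = ∫ z in k..b + 1, (z - k) :=
    intervalIntegral.integral_congr fun z hz => by
      rw [uIcc_of_le hk.2] at hz
      simp only [abs_of_nonneg (sub_nonneg.2 hz.1)]
  rw [← intervalIntegral.integral_of_le (by linarith),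
    ← intervalIntegral.integral_add_adjacent_intervals (hint b k) (hint k (b + 1)), hleft, hright,
    intervalIntegral.integral_sub intervalIntegrable_const intervalIntegral.intervalIntegrable_id,
    intervalIntegral.integral_sub intervalIntegral.intervalIntegrable_id intervalIntegrable_const]
  simp only [intervalIntegral.integral_const, integral_id, smul_eq_mul]
  nlinarith [mul_nonneg (sub_nonneg.2 hk.1) (sub_nonneg.2 hk.2)]

theorem abs_sub_integral_Ioc_le_of_abs_deriv_le {f f' : ℝ → ℝ} {b k C : ℝ}
    (hf : ∀ z ∈ Icc b (b + 1), HasDerivWithinAt f (f' z) (Icc b (b + 1)) z)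
    (hf' : ∀ z ∈ Icc b (b + 1), |f' z| ≤ C) (hk : k ∈ Icc b (b + 1)) :
    |f k - ∫ z in Ioc b (b + 1), f z| ≤ C / 2 := by
  have hC : 0 ≤ C := (abs_nonneg _).trans (hf' k hk)
  have hvol : volume.real (Ioc b (b + 1)) = 1 := by simp
  have hfint : IntegrableOn f (Ioc b (b + 1)) :=
    (ContinuousOn.integrableOn_Icc fun z hz => (hf z hz).continuousWithinAt).mono_set
      Ioc_subset_Icc_self
  have hlip : ∀ z ∈ Icc b (b + 1), ‖f k - f z‖ ≤ C * |z - k| := fun z hz => by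
    rw [abs_sub_comm z]
    exact (convex_Icc b (b + 1)).norm_image_sub_le_of_norm_hasDerivWithin_le hf hf' hz hk
  have hmean : f k - ∫ z in Ioc b (b + 1), f z = ∫ z in Ioc b (b + 1), (f k - f z) := by
    rw [integral_sub (integrableOn_const (C := f k) measure_Ioc_lt_top.ne) hfint,
      setIntegral_const, hvol, one_smul]
  calc |f k - ∫ z in Ioc b (b + 1), f z|
      ≤ ∫ z in Ioc b (b + 1), C * |z - k| := by
        rw [hmean, ← Real.norm_eq_abs]
        refine norm_integral_le_of_norm_le ((continuous_const.mul
          (continuous_abs.comp (continuous_sub_right k))).integrableOn_Ioc) ?_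
        exact (ae_restrict_iff' measurableSet_Ioc).2 <| .of_forall fun z hz =>
          hlip z (Ioc_subset_Icc_self hz)
    _ ≤ C * (1 / 2) := by
        rw [integral_const_mul]
        exact mul_le_mul_of_nonneg_left (integral_Ioc_abs_sub_le_half hk) hC
    _ = C / 2 := by ring

section RpowMulCos

variable (p c : ℝ)

theorem hasDerivAt_rpow_mul_cos {z : ℝ} (hz : z ≠ 0) :
    HasDerivAt (fun z => z ^ p * cos (c * z))
      (p * z ^ (p - 1) * cos (c * z) - z ^ p * (c * sin (c * z))) z := by
  have hcos : HasDerivAt (fun z => cos (c * z)) (-sin (c * z) * (c * 1)) z :=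
    ((hasDerivAt_id' z).const_mul c).cos
  exact ((hasDerivAt_rpow_const (Or.inl hz)).mul hcos).congr_deriv (by ring)

theorem abs_deriv_rpow_mul_cos_le {z : ℝ} (hz : 0 < z) :
    |p * z ^ (p - 1) * cos (c * z) - z ^ p * (c * sin (c * z))| ≤ (|p| / z + |c|) * z ^ p := by
  have hzp : 0 ≤ z ^ p := rpow_nonneg hz.le p
  rw [rpow_sub_one hz.ne']
  calc |p * (z ^ p / z) * cos (c * z) - z ^ p * (c * sin (c * z))|
      ≤ |p| * (z ^ p / z) * |cos (c * z)| + z ^ p * (|c| * |sin (c * z)|) := by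
        refine (abs_sub _ _).trans_eq ?_
        rw [abs_mul, abs_mul, abs_mul, abs_mul, abs_div, abs_of_nonneg hzp, abs_of_pos hz]
    _ ≤ |p| * (z ^ p / z) * 1 + z ^ p * (|c| * 1) := by
        gcongr
        · exact abs_cos_le_one _
        · exact abs_sin_le_one _
    _ = (|p| / z + |c|) * z ^ p := by ring

theorem abs_rpow_mul_cos_sub_integral_Ioc_le (hp : p ≤ 0) {b k : ℝ} (hb : 0 < b)
    (hk : k ∈ Icc b (b + 1)) :
    |k ^ p * cos (c * k) - ∫ z in Ioc b (b + 1), z ^ p * cos (c * z)| ≤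
      (|p| / b + |c|) * b ^ p / 2 := by
  refine abs_sub_integral_Ioc_le_of_abs_deriv_le (f := fun z => z ^ p * cos (c * z))
    (f' := fun z => p * z ^ (p - 1) * cos (c * z) - z ^ p * (c * sin (c * z)))
    (fun z hz => ?_) (fun z hz => ?_) hk
  · exact (hasDerivAt_rpow_mul_cos p c (hb.trans_le hz.1).ne').hasDerivWithinAt
  · have hz₀ : 0 < z := hb.trans_le hz.1
    refine (abs_deriv_rpow_mul_cos_le p c hz₀).trans ?_
    gcongr ?_ * ?_
    · gcongr
      exact hz.1
    · exact rpow_le_rpow_of_nonpos hb hz.1 hp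

theorem integrableOn_rpow_mul_cos_Ioi (hp : p < -1) {a : ℝ} (ha : 0 < a) :
    IntegrableOn (fun z => z ^ p * cos (c * z)) (Ioi a) := by
  refine (integrableOn_Ioi_rpow_of_lt hp ha).mono' ?_ ?_
  · exact (ContinuousOn.mul (continuousOn_id.rpow_const fun z hz => Or.inl (ha.trans hz).ne')
      (continuous_cos.comp (continuous_const_mul c)).continuousOn).aestronglyMeasurable
      measurableSet_Ioi
  · refine (ae_restrict_iff' measurableSet_Ioi).2 (.of_forall fun z hz => ?_)
    have hzp : 0 ≤ z ^ p := rpow_nonneg (ha.trans hz).le p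
    rw [norm_mul, norm_of_nonneg hzp]
    exact mul_le_of_le_one_right hzp (abs_cos_le_one _)

theorem abs_tsum_rpow_mul_cos_sub_integral_Ioi_le (hp : p < -1) {a : ℝ} (ha : 1 ≤ a) :
    |∑' j : ℕ, ((j + (⌊a⌋₊ + 1) : ℕ) : ℝ) ^ p * cos (c * (j + (⌊a⌋₊ + 1) : ℕ))
        - ∫ z in Ioi a, z ^ p * cos (c * z)| ≤
      (|p| / a + |c|) / 2 * ∑' j : ℕ, ((j : ℝ) + 1) ^ p := by
  have ha₀ : 0 < a := by linarith
  have hsum : Summable fun j : ℕ => ((j : ℝ) + 1) ^ p := by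
    simpa using (summable_nat_add_iff 1).2 (summable_nat_rpow.2 hp)
  rw [← tsum_mul_left]
  refine norm_tsum_sub_le_of_hasSum
    (hasSum_integral_Ioc_add_natCast (integrableOn_rpow_mul_cos_Ioi p c hp ha₀))
    (hsum.mul_left _) fun j => ?_
  have hj : (0 : ℝ) ≤ j := j.cast_nonneg
  have hk : ((j + (⌊a⌋₊ + 1) : ℕ) : ℝ) ∈ Icc (a + j) (a + j + 1) := by
    push_cast
    constructor <;> linarith [Nat.floor_le ha₀.le, Nat.lt_floor_add_one a]
  refine (abs_rpow_mul_cos_sub_integral_Ioc_le p c (by linarith) (by positivity) hk).trans ?_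
  calc (|p| / (a + j) + |c|) * (a + j) ^ p / 2 ≤ (|p| / a + |c|) * ((j : ℝ) + 1) ^ p / 2 := by
        gcongr ?_ * ?_ / 2
        · gcongr
          linarith
        · exact rpow_le_rpow_of_nonpos (by positivity) (by linarith) (by linarith)
    _ = (|p| / a + |c|) / 2 * ((j : ℝ) + 1) ^ p := by ring

end RpowMulCos

theorem stmt16_general (r : ℝ) (hr1 : 1/2 < r)
    (x : ℝ) (hx : 0 < x) (hx2 : x ≤ 1 / (Real.sqrt 2 * Real.pi)) :
    |(∑' k : ℕ, if 1 / (4 * x) < (k : ℝ) then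
          (k : ℝ) ^ (-(2 * r)) * Real.cos (2 * Real.pi * (k : ℝ) * x) else 0)
        - ∫ z in Set.Ioi (1 / (4 * x)), z ^ (-(2 * r)) * Real.cos (2 * Real.pi * x * z)|
      ≤ (Real.pi + 4 * r) * (∑' k : ℕ, ((k : ℝ) + 1) ^ (-(2 * r))) * x := by
  have h_sqrt_two : (1.4 : ℝ) < √2 := Real.lt_sqrt (by norm_num) |>.2 (by norm_num)
  have hx_quarter : x ≤ 1 / 4 :=
    hx2.trans (one_div_le_one_div_of_le (by norm_num) (by nlinarith [pi_gt_three]))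
  have ha : 1 ≤ 1 / (4 * x) := by rw [le_div_iff₀ (by positivity)]; linarith
  have hconst : (|-(2 * r)| / (1 / (4 * x)) + |2 * π * x|) / 2 = (π + 4 * r) * x := by
    rw [abs_neg, abs_of_pos (by linarith), abs_of_pos (by positivity)]
    field_simp
    ring
  have htail := abs_tsum_rpow_mul_cos_sub_integral_Ioi_le (-(2 * r)) (2 * π * x) (by linarith) ha
  rw [hconst] at htail
  rw [tsum_ite_lt_natCast_eq_tsum_add_floor (by positivity)]
  refine le_of_eq_of_le ?_ (htail.trans_eq (mul_right_comm _ _ _))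
  congr! 4 with k
  rw [mul_right_comm (2 * π)]

/-- Tail of the Korobov cosine series is approximated by the
corresponding integral: for `1/2 < r ≤ 1` and `0 < x ≤ 1/(√2 π)`,
`|Σ_{k > 1/(4x)} k^{−2r} cos(2πkx) − ∫_{1/(4x)}^∞ z^{−2r} cos(2πxz) dz|
  ≤ (π + 4r) ζ(2r) x`. -/
theorem stmt16 (r : ℝ) (hr1 : 1/2 < r) (hr2 : r ≤ 1)
    (x : ℝ) (hx : 0 < x) (hx2 : x ≤ 1 / (Real.sqrt 2 * Real.pi)) :
    |(∑' k : ℕ, if 1 / (4 * x) < (k : ℝ) then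
          (k : ℝ) ^ (-(2 * r)) * Real.cos (2 * Real.pi * (k : ℝ) * x) else 0)
        - ∫ z in Set.Ioi (1 / (4 * x)), z ^ (-(2 * r)) * Real.cos (2 * Real.pi * x * z)|
      ≤ (Real.pi + 4 * r) * (∑' k : ℕ, ((k : ℝ) + 1) ^ (-(2 * r))) * x :=
  stmt16_general r hr1 x hx hx2
end

section
/- For every r with 1/2 < r ≤ 1 and every x > 0: ∫_{1/(4x)}^∞ z^{−2r} cos(2πxz) dz ≥ −(4^{2r}/π) · x^{2r−1}. -/
/-!
Integrate by parts against `sin (c z) / c`. Since `z ^ p → 0`, the boundary term at infinity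
vanishes and the one at `a` is at most `a ^ p / c`; the remaining integral is
`(p / c) ∫_a^∞ z ^ (p - 1) sin (c z) dz`, bounded by `(|p| / c) ∫_a^∞ z ^ (p - 1) dz = a ^ p / c`.
Hence `∫_a^∞ z ^ p cos (c z) dz ≥ -2 a ^ p / c`, which for `p = -2r`, `c = 2πx`, `a = 1/(4x)` is the
claimed bound.
-/

open MeasureTheory Real Set Filter

section RpowMulTrig

variable {p a : ℝ}

theorem integrableOn_Ioi_rpow_mul_of_abs_le_one (hp : p < -1) (ha : 0 < a) {g : ℝ → ℝ}
    (hg : Continuous g) (hg1 : ∀ z, |g z| ≤ 1) :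
    IntegrableOn (fun z => z ^ p * g z) (Ioi a) :=
  Integrable.mul_bdd (integrableOn_Ioi_rpow_of_lt hp ha) hg.aestronglyMeasurable
    (ae_of_all _ hg1)

theorem abs_integral_Ioi_rpow_mul_le (hp : p < -1) (ha : 0 < a) {g : ℝ → ℝ}
    (hg1 : ∀ z, |g z| ≤ 1) :
    |∫ z in Ioi a, z ^ p * g z| ≤ -a ^ (p + 1) / (p + 1) := by
  rw [← integral_Ioi_rpow_of_lt hp ha, ← Real.norm_eq_abs]
  refine norm_integral_le_of_norm_le (integrableOn_Ioi_rpow_of_lt hp ha) ?_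
  filter_upwards [ae_restrict_mem measurableSet_Ioi] with z hz
  rw [norm_mul, Real.norm_of_nonneg (rpow_nonneg (ha.trans hz).le _)]
  exact mul_le_of_le_one_right (rpow_nonneg (ha.trans hz).le _) (hg1 z)

theorem hasDerivAt_rpow_mul_sin {z : ℝ} (hz : z ≠ 0) (p c : ℝ) :
    HasDerivAt (fun z => z ^ p * sin (c * z))
      (c * (z ^ p * cos (c * z)) + p * (z ^ (p - 1) * sin (c * z))) z := by
  have hsin : HasDerivAt (fun z => sin (c * z)) (cos (c * z) * c) z := by
    simpa using ((hasDerivAt_id z).const_mul c).sin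
  refine ((Real.hasDerivAt_rpow_const (Or.inl hz)).mul hsin).congr_deriv ?_
  ring

theorem tendsto_rpow_mul_sin_atTop (hp : p < 0) (c : ℝ) :
    Tendsto (fun z => z ^ p * sin (c * z)) atTop (nhds 0) := by
  refine squeeze_zero_norm' ?_ (by simpa using tendsto_rpow_neg_atTop (neg_pos.mpr hp))
  filter_upwards [eventually_gt_atTop 0] with z hz
  rw [norm_mul, Real.norm_of_nonneg (rpow_nonneg hz.le _)]
  exact mul_le_of_le_one_right (rpow_nonneg hz.le _) (abs_sin_le_one _)

theorem integral_Ioi_rpow_mul_cos (hp : p < -1) (ha : 0 < a) {c : ℝ} (hc : c ≠ 0) :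
    ∫ z in Ioi a, z ^ p * cos (c * z)
      = -(a ^ p * sin (c * a) + p * ∫ z in Ioi a, z ^ (p - 1) * sin (c * z)) / c := by
  have hcos := integrableOn_Ioi_rpow_mul_of_abs_le_one hp ha (by fun_prop)
    fun z => abs_cos_le_one (c * z)
  have hsin := integrableOn_Ioi_rpow_mul_of_abs_le_one (by linarith : p - 1 < -1) ha
    (by fun_prop) fun z => abs_sin_le_one (c * z)
  have hftc := integral_Ioi_of_hasDerivAt_of_tendsto
    (hasDerivAt_rpow_mul_sin ha.ne' p c).continuousAt.continuousWithinAt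
    (fun z hz => hasDerivAt_rpow_mul_sin (ha.trans hz).ne' p c)
    ((hcos.const_mul c).add (hsin.const_mul p)) (tendsto_rpow_mul_sin_atTop (by linarith) c)
  rw [integral_add (hcos.const_mul c) (hsin.const_mul p), integral_const_mul,
    integral_const_mul] at hftc
  field_simp
  linarith

theorem neg_two_mul_rpow_div_le_integral_Ioi_rpow_mul_cos (hp : p < -1) (ha : 0 < a) {c : ℝ}
    (hc : 0 < c) :
    -(2 * a ^ p / c) ≤ ∫ z in Ioi a, z ^ p * cos (c * z) := by
  have hI := abs_integral_Ioi_rpow_mul_le (by linarith : p - 1 < -1) ha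
    fun z => abs_sin_le_one (c * z)
  rw [sub_add_cancel] at hI
  have hboundary : a ^ p * sin (c * a) ≤ a ^ p :=
    mul_le_of_le_one_right (rpow_nonneg ha.le _) (sin_le_one _)
  have hremainder : p * ∫ z in Ioi a, z ^ (p - 1) * sin (c * z) ≤ a ^ p := by
    have h := mul_le_mul_of_nonpos_left (abs_le.mp hI).1 (by linarith : p ≤ 0)
    rwa [neg_div, neg_neg, mul_div_cancel₀ _ (by linarith : p ≠ 0)] at h
  rw [integral_Ioi_rpow_mul_cos hp ha hc.ne', neg_div]
  gcongr
  linarith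

end RpowMulTrig

theorem stmt17_general (r : ℝ) (hr1 : 1/2 < r) (x : ℝ) (hx : 0 < x) :
    -((4 : ℝ) ^ (2 * r) / Real.pi) * x ^ (2 * r - 1)
      ≤ ∫ z in Set.Ioi (1 / (4 * x)), z ^ (-(2 * r)) * Real.cos (2 * Real.pi * x * z) := by
  convert neg_two_mul_rpow_div_le_integral_Ioi_rpow_mul_cos (p := -(2 * r)) (by linarith)
    (by positivity : 0 < 1 / (4 * x)) (by positivity : 0 < 2 * π * x) using 1
  rw [one_div, rpow_neg (by positivity), inv_rpow (by positivity), inv_inv,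
    mul_rpow (by norm_num) hx.le, rpow_sub hx, rpow_one]
  field_simp

/-- Lower bound for the oscillating tail integral: for
`1/2 < r ≤ 1` and `x > 0`,
`∫_{1/(4x)}^∞ z^{−2r} cos(2πxz) dz ≥ −(4^{2r}/π) x^{2r−1}`. -/
theorem stmt17 (r : ℝ) (hr1 : 1/2 < r) (hr2 : r ≤ 1) (x : ℝ) (hx : 0 < x) :
    -((4 : ℝ) ^ (2 * r) / Real.pi) * x ^ (2 * r - 1)
      ≤ ∫ z in Set.Ioi (1 / (4 * x)), z ^ (-(2 * r)) * Real.cos (2 * Real.pi * x * z) :=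
  stmt17_general r hr1 x hx
end

section
/- Let (X_k)_{k≥1} be independent standard Gaussian random variables and t > 0. If t > 1/2, then almost surely the series Σ_{k=1}^∞ k^{−2t} X_k² converges (is finite). If 0 < t ≤ 1/2, then almost surely the series Σ_{k=1}^∞ k^{−2t} X_k² diverges to infinity. (Consequently, the Gaussian field associated with the Korobov space of smoothness r lies almost surely in the Korobov space of smoothness s if r − s > 1/2, and almost surely not if r − s ≤ 1/2: а loss of smoothness of exactly 1/2.) -/
/-!
Put `Y k = X k ^ 2`: these are identically distributed, integrable, pairwise independent and have
mean `1`. For `t > 1/2` the weights `(k + 1) ^ (-2t)` are summable, so the weighted series has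
finite expectation and converges almost surely. For `t ≤ 1/2` the weights dominate `1 / (k + 1)`.
By the strong law the averages `S n / n` of the `Y k` tend to `1`, so the lower bounds
`(S (2n) - S n) / (2n)` of the dyadic blocks `∑_{n ≤ k < 2n} Y k / (k + 1)` tend to `1/2`,
whereas the blocks of a convergent series tend to `0`.
-/

open MeasureTheory ProbabilityTheory Filter Finset
open scoped ENNReal NNReal Topology

lemma integral_sq_gaussianReal_zero (v : ℝ≥0) : ∫ x, x ^ 2 ∂gaussianReal 0 v = v := by
  rw [← variance_fun_id_gaussianReal (μ := 0) (v := v), variance_eq_integral aemeasurable_id',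
    integral_id_gaussianReal]
  simp

lemma integrable_sq_gaussianReal (μ : ℝ) (v : ℝ≥0) :
    Integrable (fun x => x ^ 2) (gaussianReal μ v) :=
  (memLp_id_gaussianReal 2).integrable_sq

lemma sum_Ico_div_two_mul_le_sum_Ico_div_succ {Y : ℕ → ℝ} (hY : ∀ k, 0 ≤ Y k) (n : ℕ) :
    (∑ i ∈ Ico n (2 * n), Y i) / (2 * n) ≤ ∑ i ∈ Ico n (2 * n), Y i / (i + 1) := by
  rw [sum_div]
  refine sum_le_sum fun i hi => div_le_div_of_nonneg_left (hY i) (by positivity) ?_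
  have := (mem_Ico.1 hi).2
  exact_mod_cast (by omega : i + 1 ≤ 2 * n)

lemma tendsto_sum_Ico_two_mul_of_summable {f : ℕ → ℝ} (hf : Summable f) :
    Tendsto (fun n => ∑ i ∈ Ico n (2 * n), f i) atTop (𝓝 0) := by
  have hpartial := hf.hasSum.tendsto_sum_nat
  have h2 : Tendsto (fun n : ℕ => 2 * n) atTop atTop := tendsto_id.const_mul_atTop' two_pos
  have hdiff := (hpartial.comp h2).sub hpartial
  rw [sub_self] at hdiff
  exact hdiff.congr fun n => (sum_Ico_eq_sub f (by omega)).symm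

lemma not_summable_div_succ_of_tendsto_average {Y : ℕ → ℝ} (hY : ∀ k, 0 ≤ Y k) {E : ℝ}
    (hE : 0 < E) (hT : Tendsto (fun n : ℕ => (∑ i ∈ range n, Y i) / n) atTop (𝓝 E)) :
    ¬ Summable fun k : ℕ => Y k / (k + 1) := by
  intro hs
  have h2 : Tendsto (fun n : ℕ => 2 * n) atTop atTop := tendsto_id.const_mul_atTop' two_pos
  have hblock : Tendsto (fun n : ℕ => (∑ i ∈ Ico n (2 * n), Y i) / (2 * n)) atTop (𝓝 (E / 2)) := by
    have := (hT.comp h2).sub (hT.div_const 2)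
    rw [show E - E / 2 = E / 2 by ring] at this
    refine this.congr' ?_
    filter_upwards [eventually_ne_atTop 0] with n hn
    simp only [Function.comp_apply, sum_Ico_eq_sub _ (by omega : n ≤ 2 * n)]
    push_cast
    field_simp
  have := le_of_tendsto_of_tendsto' hblock (tendsto_sum_Ico_two_mul_of_summable hs)
    (sum_Ico_div_two_mul_le_sum_Ico_div_succ hY)
  linarith

section RandomSeries

variable {Ω : Type*} [MeasurableSpace Ω] {P : Measure Ω}

theorem ae_summable_mul_of_identDistrib {a : ℕ → ℝ} (ha : Summable a) {Y : ℕ → Ω → ℝ}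
    (hint : Integrable (Y 0) P) (hident : ∀ k, IdentDistrib (Y k) (Y 0) P P) :
    ∀ᵐ ω ∂P, Summable fun k => a k * Y k ω := by
  have hnorm : ∑' k, eLpNorm (a k • Y k) 1 P ≠ ∞ := by
    calc ∑' k, eLpNorm (a k • Y k) 1 P = (∑' k, ‖a k‖ₑ) * eLpNorm (Y 0) 1 P := by
          simp only [eLpNorm_const_smul, (hident _).eLpNorm_eq, ENNReal.tsum_mul_right]
      _ ≠ ∞ := ENNReal.mul_ne_top (tsum_enorm_ne_top_iff_summable_norm.2 ha.norm)
          (memLp_one_iff_integrable.2 hint).eLpNorm_ne_top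
  filter_upwards [summable_norm_of_tsum_eLpNorm_ne_top le_rfl
    (fun k => (hident k).aestronglyMeasurable_fst.const_smul (a k)) hnorm] with ω hω
  exact hω.of_norm

theorem ae_not_summable_div_succ_of_identDistrib {Y : ℕ → Ω → ℝ} (hY : ∀ k ω, 0 ≤ Y k ω)
    (hint : Integrable (Y 0) P) (hindep : Pairwise (Function.onFun (· ⟂ᵢ[P] ·) Y))
    (hident : ∀ k, IdentDistrib (Y k) (Y 0) P P) (hmean : 0 < P[Y 0]) :
    ∀ᵐ ω ∂P, ¬ Summable fun k : ℕ => Y k ω / (k + 1) := by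
  filter_upwards [strong_law_ae_real Y hint hindep hident] with ω hω
  exact not_summable_div_succ_of_tendsto_average (fun k => hY k ω) hmean hω

end RandomSeries

theorem stmt19_general
    {Ω : Type*} [MeasurableSpace Ω] (P : Measure Ω)
    (X : ℕ → Ω → ℝ)
    (hindep : iIndepFun X P)
    (hgauss : ∀ k, Measure.map (X k) P = gaussianReal 0 1)
    (t : ℝ) :
    (1/2 < t →
      ∀ᵐ ω ∂P, Summable fun k : ℕ => ((k : ℝ) + 1) ^ (-(2 * t)) * X k ω ^ 2) ∧
    (t ≤ 1/2 →
      ∀ᵐ ω ∂P, ¬ Summable fun k : ℕ => ((k : ℝ) + 1) ^ (-(2 * t)) * X k ω ^ 2) := by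
  have hlaw (k : ℕ) : HasLaw (X k) (gaussianReal 0 1) P :=
    ⟨.of_map_ne_zero (by simpa [hgauss] using IsProbabilityMeasure.ne_zero _), hgauss k⟩
  set Y : ℕ → Ω → ℝ := fun k ω => X k ω ^ 2
  have hident (k : ℕ) : IdentDistrib (Y k) (Y 0) P P :=
    ((hlaw k).identDistrib (hlaw 0)).comp (measurable_id.pow_const 2)
  have hint : Integrable (Y 0) P :=
    ((hlaw 0).map_eq ▸ integrable_sq_gaussianReal 0 1).comp_aemeasurable (hlaw 0).aemeasurable
  have hmean : P[Y 0] = 1 := by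
    have := (hlaw 0).integral_comp (f := fun x => x ^ 2) (by fun_prop)
    simpa [integral_sq_gaussianReal_zero] using this
  constructor
  · intro ht'
    have ha : Summable fun k : ℕ => ((k : ℝ) + 1) ^ (-(2 * t)) := by
      simpa using (summable_nat_add_iff 1).2 (Real.summable_nat_rpow.2 (by linarith))
    exact ae_summable_mul_of_identDistrib ha hint hident
  · intro ht'
    have hpair : Pairwise (Function.onFun (· ⟂ᵢ[P] ·) Y) := fun i j hij =>
      (hindep.indepFun hij).comp (measurable_id.pow_const 2) (measurable_id.pow_const 2)
    filter_upwards [ae_not_summable_div_succ_of_identDistrib (fun k ω => sq_nonneg (X k ω)) hint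
      hpair hident (hmean ▸ one_pos)] with ω hω hs
    refine hω (hs.of_nonneg_of_le (fun k => by positivity) fun k => ?_)
    rw [div_eq_inv_mul, ← Real.rpow_neg_one]
    gcongr
    · exact le_add_of_nonneg_left k.cast_nonneg
    · linarith

/-- Loss of smoothness `1/2` for the Gaussian field: for
independent standard Gaussians `(X_k)_{k≥1}`, the series `Σ_{k≥1} k^{−2t} X_k²`
converges almost surely when `t > 1/2` and diverges almost surely when
`0 < t ≤ 1/2`. -/
theorem stmt19
    {Ω : Type*} [MeasurableSpace Ω] (P : Measure Ω) [IsProbabilityMeasure P]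
    (X : ℕ → Ω → ℝ)
    (hindep : iIndepFun X P)
    (hgauss : ∀ k, Measure.map (X k) P = gaussianReal 0 1)
    (t : ℝ) (ht : 0 < t) :
    (1/2 < t →
      ∀ᵐ ω ∂P, Summable fun k : ℕ => ((k : ℝ) + 1) ^ (-(2 * t)) * X k ω ^ 2) ∧
    (t ≤ 1/2 →
      ∀ᵐ ω ∂P, ¬ Summable fun k : ℕ => ((k : ℝ) + 1) ^ (-(2 * t)) * X k ω ^ 2) :=
  stmt19_general P X hindep hgauss t
end
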